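/- arXiv:2104.06228 — 7 statements merged into one kernel-verified Lean document; each statement's English description precedes it below -/
import Mathlib

section
/- Let p be an odd prime and let v ∈ ℚ_p be a p-adic unit (|v|_p = 1) that is not a square in ℚ_p. Let A = diag(1, -v, p) be the 3×3 diagonal matrix over ℚ_p. Then every matrix L ∈ M₃(ℚ_p) satisfying LᵀAL = A has all entries of p-adic absolute value at most 1; that is, all entries of L are p-adic integers. -/
/-! Column `j` of `Lᵀ A L = A` says that `Q₊(L 0 j, L 1 j, L 2 j) = A j j`, which has norm at
most `1`. Since `v` is a non-square unit and `p` is odd, Hensel's lemma rules out cancellation in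
`x² - v y²`: its norm is `max ‖x‖ ‖y‖ ^ 2`, an even power of `p`. The norm of `p z²` is an odd power
of `p`, so there is no cancellation in `Q₊` either, and `‖Q₊(x, y, z)‖ ≤ 1` forces
`x, y, z ∈ ℤ_[p]`. -/

open Polynomial in
theorem PadicInt.isSquare_of_norm_sq_sub_lt {p : ℕ} [Fact p.Prime] (hp : p ≠ 2) {v w : ℤ_[p]}
    (h : ‖w ^ 2 - v‖ < ‖w‖ ^ 2) : IsSquare v := by
  have h2 : ‖(2 : ℤ_[p])‖ = 1 := by
    have := (PadicInt.norm_natCast_eq_one_iff (p := p) (n := 2)).2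
      ((Nat.Prime.coprime_iff_not_dvd Fact.out).2 fun hdvd =>
        hp ((Nat.prime_dvd_prime_iff_eq Fact.out Nat.prime_two).1 hdvd))
    exact_mod_cast this
  obtain ⟨z, hz, -⟩ := hensels_lemma (F := X ^ 2 - C v) (a := w)
    (by simp only [derivative_X_pow, derivative_C, map_sub, aeval_X_pow, aeval_C, map_mul,
      Algebra.algebraMap_self, RingHom.id_apply]; simpa [norm_mul, h2] using h)
  exact ⟨z, (by simpa [sub_eq_zero, sq] using hz : z * z = v).symm⟩

namespace Padic

variable {p : ℕ} [Fact p.Prime]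

theorem norm_sq_sub_eq_one_of_not_isSquare (hp : p ≠ 2) {v w : ℚ_[p]} (hv : ‖v‖ = 1)
    (hvsq : ¬IsSquare v) (hw : ‖w‖ = 1) : ‖w ^ 2 - v‖ = 1 := by
  refine le_antisymm ?_ (not_lt.1 fun hlt => hvsq ?_)
  · calc ‖w ^ 2 - v‖ = ‖w ^ 2 + -v‖ := by rw [sub_eq_add_neg]
      _ ≤ max ‖w ^ 2‖ ‖-v‖ := nonarchimedean _ _
      _ = 1 := by simp [hw, hv]
  · have hsq := PadicInt.isSquare_of_norm_sq_sub_lt hp (v := (⟨v, hv.le⟩ : ℤ_[p]))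
      (w := (⟨w, hw.le⟩ : ℤ_[p])) (show ‖w ^ 2 - v‖ < ‖w‖ ^ 2 by rwa [hw, one_pow])
    exact hsq.map PadicInt.Coe.ringHom

theorem norm_sq_sub_mul_sq (hp : p ≠ 2) {v : ℚ_[p]} (hv : ‖v‖ = 1) (hvsq : ¬IsSquare v)
    (a b : ℚ_[p]) : ‖a ^ 2 - v * b ^ 2‖ = max ‖a‖ ‖b‖ ^ 2 := by
  rcases eq_or_ne ‖a‖ ‖b‖ with hab | hab
  · rcases eq_or_ne b 0 with rfl | hb
    · simp_all
    have hfac : a ^ 2 - v * b ^ 2 = ((a / b) ^ 2 - v) * b ^ 2 := by field_simp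
    have hw : ‖a / b‖ = 1 := by rw [norm_div, hab, div_self (norm_ne_zero_iff.2 hb)]
    rw [hfac, norm_mul, norm_sq_sub_eq_one_of_not_isSquare hp hv hvsq hw, hab, max_self,
      norm_pow, one_mul]
  · have hsq : ‖a‖ ^ 2 ≠ ‖b‖ ^ 2 :=
      fun h => hab ((pow_left_inj₀ (norm_nonneg _) (norm_nonneg _) two_ne_zero).1 h)
    rw [sub_eq_add_neg, add_eq_max_of_ne (by simpa [hv] using hsq)]
    simpa [hv] using ((pow_left_monotoneOn (n := 2)).map_max (norm_nonneg a) (norm_nonneg b)).symm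

theorem norm_sq_ne_norm_p_mul_sq (x : ℚ_[p]) {y : ℚ_[p]} (hy : y ≠ 0) :
    ‖x‖ ^ 2 ≠ ‖(p : ℚ_[p]) * y ^ 2‖ := by
  have hp0 : (p : ℚ_[p]) ≠ 0 := Nat.cast_ne_zero.2 (Fact.out : p.Prime).ne_zero
  rcases eq_or_ne x 0 with rfl | hx
  · simpa [hy] using hp0
  intro h
  rw [← norm_pow, norm_eq_zpow_neg_valuation (pow_ne_zero 2 hx),
    norm_eq_zpow_neg_valuation (mul_ne_zero hp0 (pow_ne_zero 2 hy)),
    valuation_mul hp0 (pow_ne_zero 2 hy), valuation_p, valuation_pow, valuation_pow] at h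
  have := zpow_right_injective₀ (by exact_mod_cast (Fact.out : p.Prime).pos)
    (by exact_mod_cast (Fact.out : p.Prime).ne_one) h
  omega

theorem norm_le_one_of_norm_p_mul_sq_le_one {c : ℚ_[p]} (h : ‖(p : ℚ_[p]) * c ^ 2‖ ≤ 1) :
    ‖c‖ ≤ 1 := by
  have hp1 : (1 : ℝ) < p := by exact_mod_cast (Fact.out : p.Prime).one_lt
  have hc : ‖c‖ < p := by
    by_contra! hc
    rw [norm_mul, norm_p, norm_pow, inv_mul_le_iff₀ (by positivity), mul_one] at h
    nlinarith
  simpa using (norm_le_pow_iff_norm_lt_pow_add_one c 0).2 (by simpa using hc)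

theorem norm_le_one_of_norm_sq_sub_mul_sq_add_p_mul_sq_le_one (hp : p ≠ 2) {v : ℚ_[p]}
    (hv : ‖v‖ = 1) (hvsq : ¬IsSquare v) {a b c : ℚ_[p]}
    (h : ‖a ^ 2 - v * b ^ 2 + p * c ^ 2‖ ≤ 1) : ‖a‖ ≤ 1 ∧ ‖b‖ ≤ 1 ∧ ‖c‖ ≤ 1 := by
  have hS := norm_sq_sub_mul_sq hp hv hvsq a b
  have hsplit : ‖a ^ 2 - v * b ^ 2‖ ≤ 1 ∧ ‖(p : ℚ_[p]) * c ^ 2‖ ≤ 1 := by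
    rcases eq_or_ne c 0 with rfl | hc
    · simpa using h
    have hne : ‖a ^ 2 - v * b ^ 2‖ ≠ ‖(p : ℚ_[p]) * c ^ 2‖ := by
      rw [hS]
      rcases max_choice ‖a‖ ‖b‖ with hm | hm <;> rw [hm] <;> exact norm_sq_ne_norm_p_mul_sq _ hc
    rwa [add_eq_max_of_ne hne, max_le_iff] at h
  have hab : max ‖a‖ ‖b‖ ≤ 1 :=
    (pow_le_one_iff_of_nonneg (le_max_of_le_left (norm_nonneg a)) two_ne_zero).1 (hS ▸ hsplit.1)
  exact ⟨le_of_max_le_left hab, le_of_max_le_right hab,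
    norm_le_one_of_norm_p_mul_sq_le_one hsplit.2⟩

end Padic

open Matrix

/-- For an odd prime `p` and a p-adic unit `v` that is not a square,
every matrix `L` with `Lᵀ A L = A` for `A = diag(1, -v, p)` has all entries in `ℤ_p`,
i.e. of p-adic norm at most 1. -/
theorem entries_integral_of_orthogonal_odd
    (p : ℕ) [Fact p.Prime] (hp : p ≠ 2)
    (v : ℚ_[p]) (hv : ‖v‖ = 1) (hvsq : ¬ IsSquare v)
    (A : Matrix (Fin 3) (Fin 3) ℚ_[p])
    (hA : A = Matrix.diagonal ![1, -v, (p : ℚ_[p])])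
    (L : Matrix (Fin 3) (Fin 3) ℚ_[p])
    (hL : Lᵀ * A * L = A) :
    ∀ i j, ‖L i j‖ ≤ 1 := by
  subst hA
  intro i j
  have hcol : (Lᵀ * diagonal ![1, -v, (p : ℚ_[p])] * L) j j
      = L 0 j ^ 2 - v * L 1 j ^ 2 + p * L 2 j ^ 2 := by
    rw [mul_apply, Fin.sum_univ_three]
    simp only [mul_diagonal, transpose_apply, cons_val_zero, cons_val_one, cons_val_two,
      tail_cons, head_cons]
    ring
  have hdiag : ‖diagonal ![1, -v, (p : ℚ_[p])] j j‖ ≤ 1 := by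
    fin_cases j <;> simp [hv, Padic.norm_p, inv_le_one_iff₀, (Fact.out : p.Prime).one_le]
  rw [← hL, hcol] at hdiag
  obtain ⟨h0, h1, h2⟩ :=
    Padic.norm_le_one_of_norm_sq_sub_mul_sq_add_p_mul_sq_le_one hp hv hvsq hdiag
  fin_cases i
  exacts [h0, h1, h2]
end

section
/- Every matrix L ∈ M₃(ℚ_2) satisfying LᵀL = I (the 3×3 identity matrix) has all entries of 2-adic absolute value at most 1; that is, all entries of L are 2-adic integers. -/
open Matrix

/-!
Take an entry `x` of largest norm in a column of `L`. Dividing the column relation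
`∑ᵢ Lᵢⱼ² = 1` by `x²` expresses `x⁻²` as a sum of three squares of 2-adic integers, one of
which is `1`. Squares are `0` or `1` mod 4, so this sum is not divisible by 4, i.e. `‖x‖⁻² > 1/4`.
Since 2-adic norms are powers of 2, `‖x‖ < 2` forces `‖x‖ ≤ 1`.
-/

lemma ZMod.sum_sq_ne_zero_of_apply_eq_one :
    ∀ (y : Fin 3 → ZMod 4) (k : Fin 3), y k = 1 → ∑ j, y j ^ 2 ≠ 0 := by
  decide

lemma PadicInt.norm_sum_sq_gt_of_apply_eq_one (y : Fin 3 → ℤ_[2]) {k : Fin 3} (hk : y k = 1) :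
    (2 : ℝ) ^ (-2 : ℤ) < ‖∑ j, y j ^ 2‖ := by
  have hmod : toZModPow 2 (∑ j, y j ^ 2) ≠ 0 := by
    simpa only [map_sum, map_pow] using
      ZMod.sum_sq_ne_zero_of_apply_eq_one _ k (by simp [hk])
  rw [← not_le]
  exact_mod_cast mt ((norm_le_pow_iff_mem_span_pow _ 2).trans
    (by rw [← ker_toZModPow, RingHom.mem_ker])).1 hmod

lemma Padic.norm_le_one_of_sum_sq_eq_one (x : Fin 3 → ℚ_[2]) (hx : ∑ j, x j ^ 2 = 1)
    (i : Fin 3) : ‖x i‖ ≤ 1 := by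
  obtain ⟨k, hk⟩ := Finite.exists_max (fun j => ‖x j‖)
  refine (hk i).trans ?_
  by_cases h0 : x k = 0
  · simp [h0]
  have hy (j : Fin 3) : ‖x j / x k‖ ≤ 1 := by
    rw [norm_div]; exact div_le_one_of_le₀ (hk j) (norm_nonneg _)
  let y : Fin 3 → ℤ_[2] := fun j => ⟨x j / x k, hy j⟩
  have hsum : ((∑ j, y j ^ 2 : ℤ_[2]) : ℚ_[2]) = (x k ^ 2)⁻¹ := by
    have hyx (j : Fin 3) : (y j : ℚ_[2]) = x j / x k := rfl
    simp only [PadicInt.coe_sum, PadicInt.coe_pow, hyx, div_pow, ← Finset.sum_div, hx, one_div]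
  have hgt := PadicInt.norm_sum_sq_gt_of_apply_eq_one y (k := k) (Subtype.ext (div_self h0))
  rw [PadicInt.norm_def, hsum, norm_inv, norm_pow] at hgt
  have hlt : ‖x k‖ < 2 := by
    rw [← inv_lt_inv₀ (by positivity) (by positivity), _root_.zpow_neg, inv_inv] at hgt
    nlinarith
  simpa using (norm_le_pow_iff_norm_lt_pow_add_one (x k) 0).2 (by simpa using hlt)

/-- Every matrix `L` over `ℚ_2` with `Lᵀ L = I` has all entries of
2-adic norm at most 1, i.e. all entries are 2-adic integers. -/
theorem entries_integral_of_orthogonal_two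
    (L : Matrix (Fin 3) (Fin 3) ℚ_[2])
    (hL : Lᵀ * L = 1) :
    ∀ i j, ‖L i j‖ ≤ 1 := by
  intro i j
  refine Padic.norm_le_one_of_sum_sq_eq_one (fun i => L i j) ?_ i
  simpa [Matrix.mul_apply, sq] using congrFun (congrFun hL j) j
end

section
/- Let p be an odd prime, v ∈ ℚ_p a p-adic unit that is not a square in ℚ_p, A = diag(1, -v, p), Q_+(x) = xᵀAx and B(x,y) = xᵀAy. Let (v₁, v₂, v₃) and (w₁, w₂, w₃) be two bases of ℚ_p³, each pairwise orthogonal with respect to B (i.e., B(vᵢ, vⱼ) = 0 and B(wᵢ, wⱼ) = 0 for all i ≠ j). Then there exists M ∈ M₃(ℚ_p) with MᵀAM = A and M vᵢ = wᵢ for i = 1, 2, 3 if and only if Q_+(vᵢ) = Q_+(wᵢ) for i = 1, 2, 3. Moreover, when this condition holds, there exists such an M which additionally has det M = 1 and maps (v₁, v₂, v₃) either to (w₁, w₂, w₃) or to (w₁, −w₂, w₃). -/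
/-!
Let `of V` be the matrix with rows `V i`. A matrix `M` with `M *ᵥ V i = W i` satisfies
`of W = of V * Mᵀ`, so for a basis `V` it exists, and it preserves `A` exactly when the Gram
matrices `of V * A * (of V)ᵀ` and `of W * A * (of W)ᵀ` agree. For orthogonal families both are
diagonal with entries `Q (V i)`, `Q (W i)`. Since `det A ≠ 0`, such an `M` has determinant `±1`;
replacing `W 1` by `-W 1` keeps the Gram matrix but negates `det (of W) = det (of V) * det M`,
so one of the two targets is reached with determinant `1`.
-/

open Matrix

namespace Matrix

variable {n K : Type*} [Fintype n] [Field K]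

def bilinGram (A : Matrix n n K) (V : n → n → K) : Matrix n n K :=
  of V * A * (of V)ᵀ

variable {A M : Matrix n n K} {V W : n → n → K}

theorem bilinGram_apply (i j : n) : bilinGram A V i j = V i ⬝ᵥ A *ᵥ V j := by
  simp only [bilinGram, mul_apply, transpose_apply, of_apply, dotProduct, mulVec,
    Finset.sum_mul, Finset.mul_sum]
  rw [Finset.sum_comm]
  exact Finset.sum_congr rfl fun _ _ => Finset.sum_congr rfl fun _ _ => by ring

theorem forall_mulVec_eq_iff : (∀ i, M *ᵥ V i = W i) ↔ of V * Mᵀ = of W := by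
  simp only [← ext_iff, funext_iff, mulVec, dotProduct, mul_apply, of_apply, transpose_apply,
    mul_comm (M _ _)]

theorem bilinGram_eq_of_mulVec_eq (h : ∀ i, M *ᵥ V i = W i) :
    bilinGram A W = of V * (Mᵀ * A * M) * (of V)ᵀ := by
  rw [bilinGram, ← forall_mulVec_eq_iff.mp h, transpose_mul, transpose_transpose]
  simp only [Matrix.mul_assoc]

variable [DecidableEq n]

theorem transpose_mul_mul_eq_iff (hV : IsUnit (of V)) (h : ∀ i, M *ᵥ V i = W i) :
    Mᵀ * A * M = A ↔ bilinGram A W = bilinGram A V := by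
  rw [bilinGram_eq_of_mulVec_eq h, bilinGram, (isUnit_transpose _).mpr hV |>.mul_left_inj,
    hV.mul_right_inj]

theorem exists_mulVec_eq (hV : IsUnit (of V)) (W : n → n → K) :
    ∃ M : Matrix n n K, ∀ i, M *ᵥ V i = W i :=
  ⟨((of V)⁻¹ * of W)ᵀ, forall_mulVec_eq_iff.mpr <| by
    rw [transpose_transpose, mul_nonsing_inv_cancel_left _ _ ((isUnit_iff_isUnit_det _).mp hV)]⟩

theorem det_of_eq_mul_det (h : ∀ i, M *ᵥ V i = W i) : (of W).det = (of V).det * M.det := by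
  rw [← forall_mulVec_eq_iff.mp h, det_mul, det_transpose]

theorem det_eq_one_or_neg_one (hA : A.det ≠ 0) (hM : Mᵀ * A * M = A) :
    M.det = 1 ∨ M.det = -1 := by
  have h := congrArg det hM
  rw [det_mul, det_mul, det_transpose] at h
  refine mul_self_eq_one_iff.mp (mul_right_cancel₀ hA ?_)
  linear_combination h

theorem bilinGram_eq_diagonal (hV : Pairwise fun i j => V i ⬝ᵥ A *ᵥ V j = 0) :
    bilinGram A V = diagonal fun i => V i ⬝ᵥ A *ᵥ V i := by
  ext i j
  rw [bilinGram_apply, diagonal_apply]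
  split_ifs with h
  · rw [h]
  · exact hV h

theorem det_of_update_neg (k : n) : (of (Function.update W k (-W k))).det = -(of W).det := by
  have : of (Function.update W k (-W k)) = updateRow (of W) k ((-1 : K) • of W k) := by
    rw [neg_one_smul]; rfl
  rw [this, det_updateRow_smul, updateRow_eq_self, neg_one_mul]

theorem dotProduct_mulVec_update_neg_self (k i : n) :
    Function.update W k (-W k) i ⬝ᵥ A *ᵥ Function.update W k (-W k) i = W i ⬝ᵥ A *ᵥ W i := by
  rcases eq_or_ne i k with rfl | hik
  · simp only [Function.update_self, mulVec_neg, dotProduct_neg, neg_dotProduct, neg_neg]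
  · simp only [Function.update_of_ne hik]

theorem pairwise_dotProduct_mulVec_update_neg (hW : Pairwise fun i j => W i ⬝ᵥ A *ᵥ W j = 0)
    (k : n) : Pairwise fun i j =>
      Function.update W k (-W k) i ⬝ᵥ A *ᵥ Function.update W k (-W k) j = 0 := by
  intro i j hij
  simp only [Function.update_apply]
  split_ifs <;> subst_vars <;>
    simp only [mulVec_neg, dotProduct_neg, neg_dotProduct, neg_neg, neg_eq_zero, hW hij]

theorem exists_isometry_mulVec_eq_iff (hV : LinearIndependent K V)
    (hVorth : Pairwise fun i j => V i ⬝ᵥ A *ᵥ V j = 0)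
    (hWorth : Pairwise fun i j => W i ⬝ᵥ A *ᵥ W j = 0) :
    (∃ M : Matrix n n K, Mᵀ * A * M = A ∧ ∀ i, M *ᵥ V i = W i) ↔
      ∀ i, V i ⬝ᵥ A *ᵥ V i = W i ⬝ᵥ A *ᵥ W i := by
  have hVu : IsUnit (of V) := linearIndependent_rows_iff_isUnit.mp hV
  constructor
  · rintro ⟨M, hM, hMV⟩ i
    rw [← bilinGram_apply, ← bilinGram_apply, (transpose_mul_mul_eq_iff hVu hMV).mp hM]
  · intro hQ
    obtain ⟨M, hMV⟩ := exists_mulVec_eq hVu W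
    refine ⟨M, (transpose_mul_mul_eq_iff hVu hMV).mpr ?_, hMV⟩
    simp only [bilinGram_eq_diagonal hVorth, bilinGram_eq_diagonal hWorth, hQ]

theorem exists_isometry_det_eq_one_mulVec_eq (hA : A.det ≠ 0) (hV : LinearIndependent K V)
    (hVorth : Pairwise fun i j => V i ⬝ᵥ A *ᵥ V j = 0)
    (hWorth : Pairwise fun i j => W i ⬝ᵥ A *ᵥ W j = 0)
    (hQ : ∀ i, V i ⬝ᵥ A *ᵥ V i = W i ⬝ᵥ A *ᵥ W i) (k : n) :
    ∃ M : Matrix n n K, Mᵀ * A * M = A ∧ M.det = 1 ∧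
      ((∀ i, M *ᵥ V i = W i) ∨ ∀ i, M *ᵥ V i = Function.update W k (-W k) i) := by
  obtain ⟨M, hM, hMV⟩ := (exists_isometry_mulVec_eq_iff hV hVorth hWorth).mpr hQ
  rcases det_eq_one_or_neg_one hA hM with hdet | hdet
  · exact ⟨M, hM, hdet, .inl hMV⟩
  obtain ⟨M', hM', hM'V⟩ := (exists_isometry_mulVec_eq_iff hV hVorth
    (pairwise_dotProduct_mulVec_update_neg hWorth k)).mpr
    fun i => (hQ i).trans (dotProduct_mulVec_update_neg_self k i).symm
  refine ⟨M', hM', ?_, .inr hM'V⟩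
  have hVdet : (of V).det ≠ 0 := (isUnit_iff_isUnit_det _).mp
    (linearIndependent_rows_iff_isUnit.mp hV) |>.ne_zero
  have h := det_of_eq_mul_det hM'V
  rw [det_of_update_neg, det_of_eq_mul_det hMV, hdet] at h
  exact mul_left_cancel₀ hVdet (by linear_combination -h)

end Matrix

theorem orthogonal_basis_transport_general
    (p : ℕ) [Fact p.Prime]
    (v : ℚ_[p]) (hv : ‖v‖ = 1)
    (A : Matrix (Fin 3) (Fin 3) ℚ_[p])
    (hA : A = Matrix.diagonal ![1, -v, (p : ℚ_[p])])
    (Q : (Fin 3 → ℚ_[p]) → ℚ_[p]) (hQ : ∀ x, Q x = x ⬝ᵥ A.mulVec x)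
    (B : (Fin 3 → ℚ_[p]) → (Fin 3 → ℚ_[p]) → ℚ_[p])
    (hB : ∀ x y, B x y = x ⬝ᵥ A.mulVec y)
    (V W : Fin 3 → (Fin 3 → ℚ_[p]))
    (hVbasis : LinearIndependent ℚ_[p] V)
    (hVorth : ∀ i j, i ≠ j → B (V i) (V j) = 0)
    (hWorth : ∀ i j, i ≠ j → B (W i) (W j) = 0) :
    ((∃ M : Matrix (Fin 3) (Fin 3) ℚ_[p], Mᵀ * A * M = A ∧
        ∀ i, M.mulVec (V i) = W i) ↔ (∀ i, Q (V i) = Q (W i))) ∧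
    ((∀ i, Q (V i) = Q (W i)) →
      ∃ M : Matrix (Fin 3) (Fin 3) ℚ_[p], Mᵀ * A * M = A ∧ M.det = 1 ∧
        ((∀ i, M.mulVec (V i) = W i) ∨
         (M.mulVec (V 0) = W 0 ∧ M.mulVec (V 1) = -(W 1) ∧ M.mulVec (V 2) = W 2))) := by
  obtain rfl : Q = fun x => x ⬝ᵥ A *ᵥ x := funext hQ
  obtain rfl : B = fun x y => x ⬝ᵥ A *ᵥ y := funext fun x => funext (hB x)
  have hAdet : A.det ≠ 0 := by
    have hv0 : v ≠ 0 := norm_ne_zero_iff.mp (hv ▸ one_ne_zero)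
    have hp0 : (p : ℚ_[p]) ≠ 0 := Nat.cast_ne_zero.mpr (Fact.out : p.Prime).ne_zero
    simp [hA, det_diagonal, Fin.prod_univ_three, hv0, hp0]
  refine ⟨exists_isometry_mulVec_eq_iff hVbasis hVorth hWorth, fun hQVW => ?_⟩
  obtain ⟨M, hM, hdet, hMV | hMV⟩ :=
    exists_isometry_det_eq_one_mulVec_eq hAdet hVbasis hVorth hWorth hQVW 1
  · exact ⟨M, hM, hdet, .inl hMV⟩
  · exact ⟨M, hM, hdet, .inr ⟨by simpa using hMV 0, by simpa using hMV 1, by simpa using hMV 2⟩⟩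

/-- For two orthogonal bases `(v₁,v₂,v₃)` and `(w₁,w₂,w₃)` of `ℚ_p³`
(with respect to the bilinear form of `A = diag(1,-v,p)`), there is an orthogonal
`M` with `M vᵢ = wᵢ` iff `Q₊(vᵢ) = Q₊(wᵢ)` for all `i`; moreover in that case such
an `M` can be chosen special (`det M = 1`), mapping `(v₁,v₂,v₃)` either to
`(w₁,w₂,w₃)` or to `(w₁,-w₂,w₃)`. -/
theorem orthogonal_basis_transport
    (p : ℕ) [Fact p.Prime] (hp : p ≠ 2)
    (v : ℚ_[p]) (hv : ‖v‖ = 1) (hvsq : ¬ IsSquare v)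
    (A : Matrix (Fin 3) (Fin 3) ℚ_[p])
    (hA : A = Matrix.diagonal ![1, -v, (p : ℚ_[p])])
    (Q : (Fin 3 → ℚ_[p]) → ℚ_[p]) (hQ : ∀ x, Q x = x ⬝ᵥ A.mulVec x)
    (B : (Fin 3 → ℚ_[p]) → (Fin 3 → ℚ_[p]) → ℚ_[p])
    (hB : ∀ x y, B x y = x ⬝ᵥ A.mulVec y)
    (V W : Fin 3 → (Fin 3 → ℚ_[p]))
    (hVbasis : LinearIndependent ℚ_[p] V)
    (hWbasis : LinearIndependent ℚ_[p] W)
    (hVorth : ∀ i j, i ≠ j → B (V i) (V j) = 0)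
    (hWorth : ∀ i j, i ≠ j → B (W i) (W j) = 0) :
    ((∃ M : Matrix (Fin 3) (Fin 3) ℚ_[p], Mᵀ * A * M = A ∧
        ∀ i, M.mulVec (V i) = W i) ↔ (∀ i, Q (V i) = Q (W i))) ∧
    ((∀ i, Q (V i) = Q (W i)) →
      ∃ M : Matrix (Fin 3) (Fin 3) ℚ_[p], Mᵀ * A * M = A ∧ M.det = 1 ∧
        ((∀ i, M.mulVec (V i) = W i) ∨
         (M.mulVec (V 0) = W 0 ∧ M.mulVec (V 1) = -(W 1) ∧ M.mulVec (V 2) = W 2))) :=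
  orthogonal_basis_transport_general p v hv A hA Q hQ B hB V W hVbasis hVorth hWorth
end

section
/- Let p be an odd prime, let u ∈ ℚ_p be a p-adic unit that is not a square in ℚ_p, and set v = −u if p ≡ 1 (mod 4) and v = −1 if p ≡ 3 (mod 4). Then every quadratic form Q on ℚ_p² that is anisotropic (Q(x) = 0 implies x = 0) is, after multiplication by a suitable nonzero scalar c ∈ ℚ_p, linearly equivalent (i.e., equal after an invertible linear change of variables) to exactly one of the three forms Q₁(x,y) = x² − v y², Q₂(x,y) = x² + p y², Q₃(x,y) = u x² + p y². In particular, no two of these three forms are linearly equivalent up to a nonzero scalar multiple. -/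
/-!
Completing the square writes an anisotropic binary form as `a * (X² + d Y²)` with `-d` not a
square, and scaling and changing variables shows that only the square class of `d` matters. For
odd `p` Hensel's lemma reduces squareness of a unit to squareness of its residue in `𝔽_p`, so
`ℚ_p^×` has the four square classes of `1, u, p, pu`; since `v` is a non-square unit, the
condition on `-d` leaves exactly the classes of `-v`, `p` and `pu`. The three forms are not
similar because in dimension two the discriminant modulo squares is a similarity invariant, and
their discriminants `-v`, `p`, `up` lie in different square classes.
-/

open QuadraticMap

namespace QuadraticForm

variable {K V : Type*} [Field K] [AddCommGroup V] [Module K V]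

def Similar (Q F : QuadraticForm K V) : Prop :=
  ∃ c : K, c ≠ 0 ∧ ∃ S : V ≃ₗ[K] V, ∀ x, c * Q x = F (S x)

section Discriminant

variable {n : Type*} [Fintype n] [DecidableEq n] [Invertible (2 : K)]

theorem discr'_weightedSumSquares (w : n → K) :
    discr' (weightedSumSquares K w) = ∏ i, w i := by
  rw [discr', ← Matrix.det_diagonal]
  congr 1
  ext i j
  rw [toMatrix', LinearMap.toMatrix₂'_apply, associated_apply]
  by_cases h : i = j
  · subst h
    simp [Pi.single_apply, mul_add, mul_ite, Finset.sum_add_distrib]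
    field_simp [Invertible.ne_zero (2 : K)]
    ring
  · simp [Pi.single_apply, h, mul_add, mul_ite, Finset.sum_add_distrib, eq_comm]

theorem Similar.exists_pow_mul_discr'_eq_sq_mul {Q F : QuadraticForm K (n → K)}
    (h : Q.Similar F) :
    ∃ c s : K, s ≠ 0 ∧ c ^ Fintype.card n * discr' Q = s ^ 2 * discr' F := by
  obtain ⟨c, -, S, hS⟩ := h
  have hcomp : c • Q = F.comp (S : (n → K) →ₗ[K] n → K) := QuadraticMap.ext hS
  have hdet : (LinearMap.toMatrix' (S : (n → K) →ₗ[K] n → K)).det ≠ 0 := by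
    rw [LinearMap.det_toMatrix']
    exact S.isUnit_det'.ne_zero
  refine ⟨c, _, hdet, ?_⟩
  rw [← discr'_smul, hcomp, discr'_comp]
  ring

theorem Similar.isSquare_discr'_mul {Q F F' : QuadraticForm K (n → K)}
    (h : Q.Similar F) (h' : Q.Similar F') (hn : Even (Fintype.card n)) :
    IsSquare (discr' F * discr' F') := by
  obtain ⟨m, hm⟩ := hn
  obtain ⟨c, s, hs, e⟩ := h.exists_pow_mul_discr'_eq_sq_mul
  obtain ⟨c', s', hs', e'⟩ := h'.exists_pow_mul_discr'_eq_sq_mul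
  refine ⟨(c * c') ^ m * discr' Q / (s * s'), ?_⟩
  rw [hm] at e e'
  field_simp
  linear_combination (-s' ^ 2 * discr' F') * e - c ^ (m + m) * discr' Q * e'

end Discriminant

theorem apply_fin_two (Q : QuadraticForm K (Fin 2 → K)) (x : Fin 2 → K) :
    Q x = x 0 ^ 2 * Q (Pi.single 0 1) + x 1 ^ 2 * Q (Pi.single 1 1) +
      x 0 * x 1 * polar Q (Pi.single 0 1) (Pi.single 1 1) := by
  have hx : x = x 0 • Pi.single 0 1 + x 1 • Pi.single 1 1 := by
    ext i; fin_cases i <;> simp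
  conv_lhs => rw [hx]
  rw [QuadraticMap.map_add Q, QuadraticMap.map_smul, QuadraticMap.map_smul, polar_smul_left,
    polar_smul_right, smul_eq_mul, smul_eq_mul, smul_eq_mul, smul_eq_mul]
  ring

theorem exists_eq_mul_sq_add_mul_sq_of_ne_zero [NeZero (2 : K)]
    (Q : QuadraticForm K (Fin 2 → K)) (ha : Q (Pi.single 0 1) ≠ 0) :
    ∃ t d : K, ∀ x, Q x = Q (Pi.single 0 1) * ((x 0 + t * x 1) ^ 2 + d * x 1 ^ 2) := by
  set a := Q (Pi.single 0 1)
  set r := polar Q (Pi.single 0 1) (Pi.single 1 1)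
  refine ⟨r / (2 * a), Q (Pi.single 1 1) / a - (r / (2 * a)) ^ 2, fun x => ?_⟩
  rw [apply_fin_two Q x]
  field_simp
  ring

theorem _root_.QuadraticMap.Anisotropic.exists_eq_mul_sq_add_mul_sq [NeZero (2 : K)]
    {Q : QuadraticForm K (Fin 2 → K)} (hQ : Q.Anisotropic) :
    ∃ a t d : K, a ≠ 0 ∧ ¬IsSquare (-d) ∧
      ∀ x, Q x = a * ((x 0 + t * x 1) ^ 2 + d * x 1 ^ 2) := by
  have ha : Q (Pi.single 0 1) ≠ 0 := fun h => by simpa using hQ _ h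
  obtain ⟨t, d, hQtd⟩ := exists_eq_mul_sq_add_mul_sq_of_ne_zero Q ha
  refine ⟨_, t, d, ha, fun ⟨z, hz⟩ => ?_, hQtd⟩
  have hzero : Q ![z - t, 1] = 0 := by
    rw [hQtd]
    simp only [Matrix.cons_val_zero, Matrix.cons_val_one]
    linear_combination (-Q (Pi.single 0 1)) * hz
  simpa using congrFun (hQ _ hzero) 1

theorem similar_weightedSumSquares_of_mul_eq_sq_mul {Q : QuadraticForm K (Fin 2 → K)}
    {a t d α β s : K} (ha : a ≠ 0) (hα : α ≠ 0) (hd : d ≠ 0)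
    (hQ : ∀ x, Q x = a * ((x 0 + t * x 1) ^ 2 + d * x 1 ^ 2)) (hdα : α * d = s ^ 2 * β) :
    Q.Similar (weightedSumSquares K ![α, β]) := by
  have hs : s ≠ 0 := by rintro rfl; simp_all
  have hdet : IsUnit (!![1, t; 0, s] : Matrix (Fin 2) (Fin 2) K).det := by
    simpa [Matrix.det_fin_two]
  refine ⟨α / a, div_ne_zero hα ha,
    Matrix.toLinearEquiv' _ (Matrix.invertibleOfIsUnitDet _ hdet), fun x => ?_⟩
  change _ = weightedSumSquares K ![α, β] (Matrix.toLin' _ x)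
  simp [Fin.sum_univ_two, hQ, Matrix.vecHead, Matrix.vecTail]
  field_simp
  linear_combination x 1 ^ 2 * hdα

end QuadraticForm

namespace PadicInt

variable {p : ℕ} [Fact p.Prime]

theorem toZMod_eq_zero_iff {x : ℤ_[p]} : toZMod x = 0 ↔ ‖x‖ < 1 := by
  rw [← RingHom.mem_ker, ker_toZMod, IsLocalRing.mem_maximalIdeal, mem_nonunits]

theorem norm_eq_one_iff_toZMod_ne_zero {x : ℤ_[p]} : ‖x‖ = 1 ↔ toZMod x ≠ 0 := by
  rw [Ne, toZMod_eq_zero_iff, not_lt]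
  exact ⟨ge_of_eq, fun h => le_antisymm x.norm_le_one h⟩

open Polynomial in
theorem isSquare_iff_isSquare_toZMod (hp : p ≠ 2) {x : ℤ_[p]} (hx : IsUnit x) :
    IsSquare x ↔ IsSquare (toZMod x) := by
  refine ⟨IsSquare.map toZMod, fun ⟨y, hy⟩ => ?_⟩
  obtain ⟨b, rfl⟩ := ZMod.ringHom_surjective toZMod y
  have h2 : (2 : ZMod p) ≠ 0 := Ring.two_ne_zero (by rwa [ZMod.ringChar_zmod_n])
  have hderiv : ‖2 * b‖ = 1 := by
    rw [norm_eq_one_iff_toZMod_ne_zero, map_mul, map_ofNat]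
    refine mul_ne_zero h2 fun hb => ?_
    rw [isUnit_iff, norm_eq_one_iff_toZMod_ne_zero, hy, hb, mul_zero] at hx
    exact hx rfl
  have hval : ‖b ^ 2 - x‖ < 1 := by
    rw [← toZMod_eq_zero_iff, map_sub, map_pow, hy, pow_two, sub_self]
  have hF : aeval b (X ^ 2 - C x) = b ^ 2 - x := by simp
  have hF' : aeval b (derivative (X ^ 2 - C x)) = 2 * b := by simp [one_add_one_eq_two]
  obtain ⟨z, hz, -⟩ := hensels_lemma (by rwa [hF, hF', hderiv, one_pow])
  exact ⟨z, (sub_eq_zero.mp (by simpa [pow_two] using hz)).symm⟩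

theorem isSquare_mul_of_not_isSquare (hp : p ≠ 2) {x y : ℤ_[p]} (hx : IsUnit x)
    (hy : IsUnit y) (hxsq : ¬IsSquare x) (hysq : ¬IsSquare y) : IsSquare (x * y) := by
  rw [isSquare_iff_isSquare_toZMod hp hx, ← quadraticChar_neg_one_iff_not_isSquare] at hxsq
  rw [isSquare_iff_isSquare_toZMod hp hy, ← quadraticChar_neg_one_iff_not_isSquare] at hysq
  rw [isSquare_iff_isSquare_toZMod hp (hx.mul hy),
    ← quadraticChar_one_iff_isSquare ((hx.mul hy).map toZMod).ne_zero, map_mul, map_mul, hxsq,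
    hysq]
  rfl

theorem isSquare_coe_iff {x : ℤ_[p]} : IsSquare (x : ℚ_[p]) ↔ IsSquare x := by
  refine ⟨fun ⟨t, ht⟩ => ?_, IsSquare.map Coe.ringHom⟩
  have ht1 : ‖t‖ ≤ 1 := by
    have : ‖t‖ * ‖t‖ ≤ 1 := by rw [← norm_mul, ← ht]; exact x.norm_le_one
    nlinarith [norm_nonneg t]
  exact ⟨⟨t, ht1⟩, Subtype.ext ht⟩

end PadicInt

namespace Padic

variable {p : ℕ} [Fact p.Prime]

theorem isSquare_mul_of_not_isSquare (hp : p ≠ 2) {w w' : ℚ_[p]} (hw : ‖w‖ = 1)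
    (hw' : ‖w'‖ = 1) (hwsq : ¬IsSquare w) (hwsq' : ¬IsSquare w') : IsSquare (w * w') := by
  obtain ⟨x, rfl⟩ : ∃ x : ℤ_[p], (x : ℚ_[p]) = w := ⟨⟨w, hw.le⟩, rfl⟩
  obtain ⟨y, rfl⟩ : ∃ y : ℤ_[p], (y : ℚ_[p]) = w' := ⟨⟨w', hw'.le⟩, rfl⟩
  rw [PadicInt.isSquare_coe_iff] at hwsq hwsq'
  rw [← PadicInt.coe_mul, PadicInt.isSquare_coe_iff]
  exact PadicInt.isSquare_mul_of_not_isSquare hp (PadicInt.isUnit_iff.mpr hw)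
    (PadicInt.isUnit_iff.mpr hw') hwsq hwsq'

theorem exists_eq_sq_mul_of_not_isSquare (hp : p ≠ 2) {w w' : ℚ_[p]} (hw : ‖w‖ = 1)
    (hw' : ‖w'‖ = 1) (hwsq : ¬IsSquare w) (hwsq' : ¬IsSquare w') : ∃ t, w = t ^ 2 * w' := by
  obtain ⟨r, hr⟩ := isSquare_mul_of_not_isSquare hp hw hw' hwsq hwsq'
  have hw'0 : w' ≠ 0 := by rintro rfl; simp at hw'
  exact ⟨r / w', by field_simp; linear_combination hr⟩

theorem isSquare_neg_one_iff (hp : p ≠ 2) : IsSquare (-1 : ℚ_[p]) ↔ p % 4 ≠ 3 := by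
  rw [show (-1 : ℚ_[p]) = ((-1 : ℤ_[p]) : ℚ_[p]) by simp, PadicInt.isSquare_coe_iff,
    PadicInt.isSquare_iff_isSquare_toZMod hp isUnit_one.neg, map_neg, map_one,
    ZMod.exists_sq_eq_neg_one_iff]

theorem valuation_eq_zero_of_norm_eq_one {w : ℚ_[p]} (hw : ‖w‖ = 1) : w.valuation = 0 := by
  have hw0 : w ≠ 0 := by rintro rfl; simp at hw
  rwa [norm_eq_zpow_neg_valuation hw0, zpow_eq_one_iff_right₀ (by positivity)
    (by exact_mod_cast (Fact.out : p.Prime).ne_one), neg_eq_zero] at hw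

theorem not_isSquare_p_mul {w : ℚ_[p]} (hw : ‖w‖ = 1) : ¬IsSquare ((p : ℚ_[p]) * w) := by
  rintro ⟨t, ht⟩
  have hp0 : (p : ℚ_[p]) ≠ 0 := by exact_mod_cast (Fact.out : p.Prime).ne_zero
  have hw0 : w ≠ 0 := by rintro rfl; simp at hw
  have ht0 : t ≠ 0 := by rintro rfl; simp_all
  have hval := congrArg valuation ht
  rw [valuation_mul hp0 hw0, valuation_mul ht0 ht0, valuation_p,
    valuation_eq_zero_of_norm_eq_one hw] at hval
  omega

theorem exists_eq_sq_mul_unit {a : ℚ_[p]} (ha : a ≠ 0) :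
    ∃ s w : ℚ_[p], ‖w‖ = 1 ∧ (a = s ^ 2 * w ∨ a = s ^ 2 * (p * w)) := by
  have hp0 : (p : ℚ_[p]) ≠ 0 := by exact_mod_cast (Fact.out : p.Prime).ne_zero
  set w := a * (p : ℚ_[p]) ^ (-a.valuation)
  have hw : ‖w‖ = 1 := by
    rw [norm_mul, norm_zpow, norm_p, norm_eq_zpow_neg_valuation ha, inv_zpow', neg_neg,
      ← zpow_add₀ (by exact_mod_cast (Fact.out : p.Prime).ne_zero)]
    simp
  have ha' : a = (p : ℚ_[p]) ^ a.valuation * w := by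
    rw [mul_left_comm, ← zpow_add₀ hp0]; simp
  obtain ⟨m, hm | hm⟩ := Int.even_or_odd' a.valuation
  · refine ⟨p ^ m, w, hw, Or.inl ?_⟩
    rw [ha', hm, ← zpow_natCast, ← zpow_mul]; ring_nf
  · refine ⟨p ^ m, w, hw, Or.inr ?_⟩
    rw [ha', hm, zpow_add_one₀ hp0, ← zpow_natCast, ← zpow_mul]; ring_nf

theorem norm_eq_one_and_not_isSquare_of_mod_four (hp : p ≠ 2) {u v : ℚ_[p]} (hu : ‖u‖ = 1)
    (husq : ¬IsSquare u) (hv1 : p % 4 = 1 → v = -u) (hv3 : p % 4 = 3 → v = -1) :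
    ‖v‖ = 1 ∧ ¬IsSquare v := by
  have hodd : p % 2 = 1 := (Fact.out : p.Prime).mod_two_eq_one_iff_ne_two.mpr hp
  obtain h4 | h4 : p % 4 = 1 ∨ p % 4 = 3 := by omega
  · refine hv1 h4 ▸ ⟨by rwa [norm_neg], fun hsq => husq ?_⟩
    simpa using ((isSquare_neg_one_iff hp).mpr (by omega)).mul hsq
  · exact hv3 h4 ▸ ⟨by simp, by rw [isSquare_neg_one_iff hp]; omega⟩

theorem exists_sq_mul_of_not_isSquare_neg (hp : p ≠ 2) {u v d : ℚ_[p]} (hu : ‖u‖ = 1)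
    (husq : ¬IsSquare u) (hv : ‖v‖ = 1) (hvsq : ¬IsSquare v) (hd : ¬IsSquare (-d)) :
    (∃ s, d = s ^ 2 * -v) ∨ (∃ s, d = s ^ 2 * p) ∨ (∃ s, u * d = s ^ 2 * p) := by
  have hd0 : d ≠ 0 := by rintro rfl; simp at hd
  obtain ⟨s, w, hw, rfl | rfl⟩ := exists_eq_sq_mul_unit hd0
  · have hwsq : ¬IsSquare (-w) := fun h => hd (by
      rw [show -(s ^ 2 * w) = s ^ 2 * -w by ring]; exact (IsSquare.sq s).mul h)
    obtain ⟨t, ht⟩ := exists_eq_sq_mul_of_not_isSquare hp (by rwa [norm_neg]) hv hwsq hvsq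
    exact Or.inl ⟨s * t, by linear_combination (-s ^ 2) * ht⟩
  · by_cases hwsq : IsSquare w
    · obtain ⟨r, rfl⟩ := hwsq
      exact Or.inr (Or.inl ⟨s * r, by ring⟩)
    · obtain ⟨t, ht⟩ := exists_eq_sq_mul_of_not_isSquare hp hw hu hwsq husq
      exact Or.inr (Or.inr ⟨s * t * u, by rw [ht]; ring⟩)

theorem eq_of_isSquare_mul {u v : ℚ_[p]} (hu : ‖u‖ = 1) (husq : ¬IsSquare u)
    (hv : ‖v‖ = 1) {i j : Fin 3}
    (h : IsSquare (![-v, (p : ℚ_[p]), u * p] i * ![-v, (p : ℚ_[p]), u * p] j)) : i = j := by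
  have hpw : ∀ w z : ℚ_[p], ‖w‖ = 1 → z = p * w → ¬IsSquare z := fun w z hw hz =>
    hz ▸ not_isSquare_p_mul hw
  have hvu : ‖-(v * u)‖ = 1 := by rw [norm_neg, norm_mul, hv, hu, one_mul]
  have hpu : ∀ z : ℚ_[p], z = p ^ 2 * u → ¬IsSquare z := fun z hz hsq =>
    husq (by simpa [hz, (Fact.out : p.Prime).ne_zero] using hsq.div (IsSquare.sq (p : ℚ_[p])))
  fin_cases i <;> fin_cases j <;> simp at h ⊢
  · exact hpw (-v) _ (by rwa [norm_neg]) (by ring) h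
  · exact hpw _ _ hvu (by ring) h
  · exact hpw (-v) _ (by rwa [norm_neg]) (by ring) h
  · exact hpu _ (by ring) h
  · exact hpw _ _ hvu (by ring) h
  · exact hpu _ (by ring) h

end Padic

open QuadraticForm in
/-- For an odd prime `p`, with `u` a non-square p-adic unit and
`v = -u` if `p ≡ 1 (mod 4)`, `v = -1` if `p ≡ 3 (mod 4)`, every anisotropic
quadratic form on `ℚ_p²` is, after multiplication by a suitable nonzero scalar,
linearly equivalent to exactly one of `x² - v y²`, `x² + p y²`, `u x² + p y²`. -/
theorem anisotropic_binary_forms_classification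
    (p : ℕ) [Fact p.Prime] (hp : p ≠ 2)
    (u : ℚ_[p]) (hu : ‖u‖ = 1) (husq : ¬ IsSquare u)
    (v : ℚ_[p])
    (hv1 : p % 4 = 1 → v = -u) (hv3 : p % 4 = 3 → v = -1)
    (Q : QuadraticForm ℚ_[p] (Fin 2 → ℚ_[p]))
    (hQ : ∀ x, Q x = 0 → x = 0) :
    ∃! i : Fin 3,
      ∃ c : ℚ_[p], c ≠ 0 ∧
        ∃ S : (Fin 2 → ℚ_[p]) ≃ₗ[ℚ_[p]] (Fin 2 → ℚ_[p]),
          ∀ x : Fin 2 → ℚ_[p],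
            c * Q x =
              ![fun y : Fin 2 → ℚ_[p] => y 0 ^ 2 - v * y 1 ^ 2,
                fun y : Fin 2 → ℚ_[p] => y 0 ^ 2 + (p : ℚ_[p]) * y 1 ^ 2,
                fun y : Fin 2 → ℚ_[p] => u * y 0 ^ 2 + (p : ℚ_[p]) * y 1 ^ 2] i (S x) := by
  obtain ⟨hv, hvsq⟩ := Padic.norm_eq_one_and_not_isSquare_of_mod_four hp hu husq hv1 hv3
  set W : Fin 3 → Fin 2 → ℚ_[p] := ![![1, -v], ![1, p], ![u, p]]
  have hW : ∀ i y, ![fun y : Fin 2 → ℚ_[p] => y 0 ^ 2 - v * y 1 ^ 2,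
      fun y : Fin 2 → ℚ_[p] => y 0 ^ 2 + (p : ℚ_[p]) * y 1 ^ 2,
      fun y : Fin 2 → ℚ_[p] => u * y 0 ^ 2 + (p : ℚ_[p]) * y 1 ^ 2] i y =
      weightedSumSquares ℚ_[p] (W i) y := by
    intro i y; fin_cases i <;> simp [W, Fin.sum_univ_two] <;> ring
  simp_rw [hW]
  change ∃! i, Q.Similar (weightedSumSquares ℚ_[p] (W i))
  obtain ⟨a, t, d, ha, hd, hQd⟩ := QuadraticMap.Anisotropic.exists_eq_mul_sq_add_mul_sq hQ
  have hd0 : d ≠ 0 := by rintro rfl; simp at hd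
  refine existsUnique_of_exists_of_unique ?_ fun i j hi hj => ?_
  · rcases Padic.exists_sq_mul_of_not_isSquare_neg hp hu husq hv hvsq hd with
      ⟨s, hs⟩ | ⟨s, hs⟩ | ⟨s, hs⟩
    · exact ⟨0, similar_weightedSumSquares_of_mul_eq_sq_mul ha one_ne_zero hd0 hQd
        (by rw [one_mul, hs])⟩
    · exact ⟨1, similar_weightedSumSquares_of_mul_eq_sq_mul ha one_ne_zero hd0 hQd
        (by rw [one_mul, hs])⟩
    · exact ⟨2, similar_weightedSumSquares_of_mul_eq_sq_mul ha (by rintro rfl; simp at hu)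
        hd0 hQd hs⟩
  · have hdiscr : ∀ k,
        discr' (weightedSumSquares ℚ_[p] (W k)) = ![-v, (p : ℚ_[p]), u * p] k := by
      intro k; fin_cases k <;> simp [W, discr'_weightedSumSquares]
    exact Padic.eq_of_isSquare_mul hu husq hv
      (by simpa only [hdiscr] using hi.isSquare_discr'_mul hj (by simp))
end

section
/- Let p be a prime and α ∈ ℚ_p such that −α is not a square in ℚ_p, and let A = diag(1, α) be a 2×2 matrix over ℚ_p. For σ ∈ ℚ_p define R(σ) = (1/(1+ασ²)) · [[1−ασ², −2ασ], [2σ, 1−ασ²]]. Then: (i) 1 + ασ² ≠ 0 for every σ ∈ ℚ_p; (ii) for every σ ∈ ℚ_p, R(σ) satisfies R(σ)ᵀ A R(σ) = A and det R(σ) = 1, and the matrix −I also satisfies these conditions; (iii) every L ∈ M₂(ℚ_p) with LᵀAL = A and det L = 1 equals either −I or R(σ) for some σ ∈ ℚ_p; (iv) the parametrization is one-to-one: R(σ) = R(τ) implies σ = τ, and R(σ) ≠ −I for every σ ∈ ℚ_p. -/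
/-!
The special orthogonal group of `x² + α y²` consists of the matrices `[[a, -α c], [c, a]]`
with `a² + α c² = 1`, i.e. of the points of the conic `a² + α c² = 1`. Projecting this conic
from its point `(-1, 0)` onto the `c`-axis gives `σ = c / (1 + a)`, whose inverse is the
rational parametrization `R(σ)`; the only point the projection misses is `(-1, 0)` itself,
i.e. `-I`, because `α ≠ 0` forces `c = 0` when `a = -1`. When `-α` is not a square the
denominators `1 + α σ²` never vanish.
-/

open Matrix

section

variable {K : Type*} [Field K] {α : K}

theorem one_add_mul_sq_ne_zero (hα : ¬IsSquare (-α)) (σ : K) : 1 + α * σ ^ 2 ≠ 0 := by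
  intro h
  rcases eq_or_ne σ 0 with rfl | hσ
  · simp at h
  · exact hα ⟨σ⁻¹, by field_simp; linear_combination -h⟩

def so2Mat (α a c : K) : Matrix (Fin 2) (Fin 2) K := !![a, -(α * c); c, a]

theorem so2Mat_inj {a c a' c' : K} : so2Mat α a c = so2Mat α a' c' ↔ a = a' ∧ c = c' := by
  refine ⟨fun h => ⟨congrFun (congrFun h 0) 0, congrFun (congrFun h 1) 0⟩, ?_⟩
  rintro ⟨rfl, rfl⟩
  rfl

theorem so2Mat_neg_one_zero : so2Mat α (-1) 0 = -1 := by
  ext i j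
  fin_cases i <;> fin_cases j <;> simp [so2Mat]

theorem transpose_mul_diagonal_mul_eq_self_and_det_eq_one_iff {L : Matrix (Fin 2) (Fin 2) K} :
    Lᵀ * diagonal ![1, α] * L = diagonal ![1, α] ∧ L.det = 1 ↔
      ∃ a c, L = so2Mat α a c ∧ a ^ 2 + α * c ^ 2 = 1 := by
  obtain ⟨a, b, c, d, rfl⟩ : ∃ a b c d, L = !![a, b; c, d] :=
    ⟨L 0 0, L 0 1, L 1 0, L 1 1, eta_fin_two L⟩
  simp only [det_fin_two_of, so2Mat, ← Matrix.ext_iff, Fin.forall_fin_two]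
  simp only [Fin.isValue, Matrix.mul_apply, transpose_apply, of_apply, cons_val', cons_val_zero,
    cons_val_fin_one, Fin.sum_univ_two, cons_val_one, diagonal_apply_eq, mul_one, ne_eq,
    one_ne_zero, not_false_eq_true, diagonal_apply_ne, mul_zero, add_zero, zero_ne_one, zero_add,
    existsAndEq, true_and]
  constructor
  · rintro ⟨⟨⟨h00, h01⟩, -⟩, hdet⟩
    exact ⟨⟨by linear_combination -α * c * hdet + a * h01 - b * h00,
      by linear_combination a * hdet + c * h01 - d * h00⟩, by linear_combination h00⟩
  · rintro ⟨⟨rfl, rfl⟩, h⟩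
    exact ⟨⟨⟨by linear_combination h, by ring⟩, by ring, by linear_combination α * h⟩,
      by linear_combination h⟩

def cayleyParam (α σ : K) : Matrix (Fin 2) (Fin 2) K :=
  (1 + α * σ ^ 2)⁻¹ • !![1 - α * σ ^ 2, -(2 * α * σ); 2 * σ, 1 - α * σ ^ 2]

-- The two coordinates `a`, `c` of `cayleyParam α σ` are called `fst` and `snd` in the names below.
theorem cayleyParam_eq_so2Mat (σ : K) :
    cayleyParam α σ =
      so2Mat α ((1 - α * σ ^ 2) / (1 + α * σ ^ 2)) (2 * σ / (1 + α * σ ^ 2)) := by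
  ext i j
  fin_cases i <;> fin_cases j <;> simp [cayleyParam, so2Mat] <;> ring

section Cayley

variable {σ : K} (hσ : 1 + α * σ ^ 2 ≠ 0)
include hσ

theorem cayley_sq_add_mul_sq :
    ((1 - α * σ ^ 2) / (1 + α * σ ^ 2)) ^ 2 + α * (2 * σ / (1 + α * σ ^ 2)) ^ 2 = 1 := by
  field_simp
  ring

theorem one_add_cayley_fst :
    1 + (1 - α * σ ^ 2) / (1 + α * σ ^ 2) = 2 / (1 + α * σ ^ 2) := by
  field_simp
  ring

theorem cayley_snd_div_one_add_fst [NeZero (2 : K)] :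
    2 * σ / (1 + α * σ ^ 2) / (1 + (1 - α * σ ^ 2) / (1 + α * σ ^ 2)) = σ := by
  rw [one_add_cayley_fst hσ, div_div_div_cancel_right₀ hσ, mul_div_cancel_left₀ σ two_ne_zero]

end Cayley

theorem so2Mat_eq_cayleyParam [NeZero (2 : K)] {a c : K} (h : a ^ 2 + α * c ^ 2 = 1)
    (ha : 1 + a ≠ 0) : so2Mat α a c = cayleyParam α (c / (1 + a)) := by
  have hden : 1 + α * (c / (1 + a)) ^ 2 = 2 / (1 + a) := by
    field_simp
    linear_combination h
  rw [cayleyParam_eq_so2Mat, so2Mat_inj, hden]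
  constructor
  · field_simp
    linear_combination h
  · field_simp

end

/-- Parametrization of `SO(2)_p^α` for `-α` not a square, by
`R(σ) = (1+ασ²)⁻¹ [[1-ασ², -2ασ],[2σ, 1-ασ²]]` together with `-I`:
(i) `1 + ασ² ≠ 0`; (ii) `R(σ)` and `-I` lie in `SO(2)_p^α`; (iii) every element
of `SO(2)_p^α` equals `-I` or some `R(σ)`; (iv) the parametrization is injective
and never equals `-I`. -/
theorem so2p_parametrization
    (p : ℕ) [Fact p.Prime]
    (α : ℚ_[p]) (hα : ¬ IsSquare (-α))
    (A : Matrix (Fin 2) (Fin 2) ℚ_[p]) (hA : A = Matrix.diagonal ![1, α])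
    (R : ℚ_[p] → Matrix (Fin 2) (Fin 2) ℚ_[p])
    (hR : ∀ σ, R σ = (1 + α * σ ^ 2)⁻¹ •
      Matrix.of ![![1 - α * σ ^ 2, -(2 * α * σ)], ![2 * σ, 1 - α * σ ^ 2]]) :
    (∀ σ : ℚ_[p], 1 + α * σ ^ 2 ≠ 0) ∧
    (∀ σ : ℚ_[p], (R σ)ᵀ * A * R σ = A ∧ (R σ).det = 1) ∧
    ((-1 : Matrix (Fin 2) (Fin 2) ℚ_[p])ᵀ * A * (-1) = A ∧
      (-1 : Matrix (Fin 2) (Fin 2) ℚ_[p]).det = 1) ∧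
    (∀ L : Matrix (Fin 2) (Fin 2) ℚ_[p], Lᵀ * A * L = A → L.det = 1 →
      L = -1 ∨ ∃ σ : ℚ_[p], L = R σ) ∧
    (∀ σ τ : ℚ_[p], R σ = R τ → σ = τ) ∧
    (∀ σ : ℚ_[p], R σ ≠ -1) := by
  obtain rfl : R = cayleyParam α := funext hR
  subst hA
  have hden := one_add_mul_sq_ne_zero hα
  refine ⟨hden, fun σ => ?_, ⟨by simp, by simp [det_neg]⟩, fun L hL hdet => ?_,
    fun σ τ h => ?_, fun σ h => ?_⟩
  · exact transpose_mul_diagonal_mul_eq_self_and_det_eq_one_iff.2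
      ⟨_, _, cayleyParam_eq_so2Mat σ, cayley_sq_add_mul_sq (hden σ)⟩
  · obtain ⟨a, c, rfl, hac⟩ := transpose_mul_diagonal_mul_eq_self_and_det_eq_one_iff.1 ⟨hL, hdet⟩
    by_cases ha : 1 + a = 0
    · obtain rfl : a = -1 := by linear_combination ha
      obtain rfl : c = 0 := by
        have hα0 : α ≠ 0 := fun h => hα ⟨0, by simp [h]⟩
        simpa [hα0] using hac
      exact Or.inl so2Mat_neg_one_zero
    · exact Or.inr ⟨_, so2Mat_eq_cayleyParam hac ha⟩
  · rw [cayleyParam_eq_so2Mat σ, cayleyParam_eq_so2Mat τ, so2Mat_inj] at h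
    rw [← cayley_snd_div_one_add_fst (hden σ), ← cayley_snd_div_one_add_fst (hden τ), h.1, h.2]
  · rw [cayleyParam_eq_so2Mat σ, ← so2Mat_neg_one_zero, so2Mat_inj] at h
    have hsum := one_add_cayley_fst (hden σ)
    rw [h.1, add_neg_cancel] at hsum
    exact div_ne_zero two_ne_zero (hden σ) hsum.symm
end

section
/- Let p be an odd prime, let u ∈ ℚ_p be a p-adic unit that is not a square in ℚ_p, set v = −u if p ≡ 1 (mod 4) and v = −1 if p ≡ 3 (mod 4), and let Q_+(x) = x₁² − v x₂² + p x₃² on ℚ_p³. Then for every α in the set {−v, p, u·p}, there exist a nonzero vector n ∈ ℚ_p³ and a nonzero scalar s ∈ ℚ_p such that Q_+(n) = −v·p·α·s². (Consequently, every equivalence class of definite binary quadratic forms over ℚ_p is realized, up to equivalence and scaling, as the restriction of Q_+ to the plane orthogonal to some axis n.) -/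
/-! For `α = -v` and `α = p` the axes `(0, 0, v)` and `(0, p, 0)` work with `s = 1`, and so does
`(u p, 0, 0)` for `α = u p` when `p ≡ 1 (mod 4)`. For `p ≡ 3 (mod 4)`, where `v = -1`, one needs
`u p² = n₁² + n₂²`: every element of `𝔽_p` is a sum of two squares, and Hensel's lemma lifts such a
decomposition of the residue of the unit `u` to `ℤ_p`. -/

open Polynomial IsLocalRing

theorem HenselianRing.isSquare_of_sq_sub_mem {R : Type*} [CommRing R] {I : Ideal R}
    [HenselianRing R I] {a c : R} (ha : IsUnit (2 * a)) (hc : a ^ 2 - c ∈ I) : IsSquare c := by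
  have hderiv : (X ^ 2 - C c).derivative.eval a = 2 * a := by
    simp only [derivative_sub, derivative_X_sq, derivative_C, sub_zero, eval_mul, eval_C, eval_X]
  obtain ⟨b, hb, -⟩ := HenselianRing.is_henselian (X ^ 2 - C c) (monic_X_pow_sub_C c two_ne_zero)
    a (by simpa using hc) (by rw [hderiv]; exact ha.map _)
  refine ⟨b, ?_⟩
  rw [← sq, eq_comm, ← sub_eq_zero]
  simpa using hb

theorem PadicInt.isUnit_iff_toZMod_ne_zero {p : ℕ} [Fact p.Prime] {z : ℤ_[p]} :
    IsUnit z ↔ toZMod z ≠ 0 := by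
  rw [ne_eq, ← RingHom.mem_ker, ker_toZMod, mem_maximalIdeal, mem_nonunits_iff, not_not]

theorem PadicInt.isUnit_two {p : ℕ} [Fact p.Prime] (hp : p ≠ 2) : IsUnit (2 : ℤ_[p]) := by
  rw [isUnit_iff, ← Nat.cast_ofNat, norm_natCast_eq_one_iff]
  exact (Nat.coprime_primes Fact.out Nat.prime_two).mpr hp

theorem PadicInt.exists_sq_add_sq_of_isUnit {p : ℕ} [Fact p.Prime] (hp : p ≠ 2) {c : ℤ_[p]}
    (hc : IsUnit c) : ∃ a b : ℤ_[p], c = a ^ 2 + b ^ 2 := by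
  obtain ⟨x, y, hxy⟩ := ZMod.sq_add_sq p (toZMod c)
  wlog hx : x ≠ 0 generalizing x y
  · refine this y x (by rw [← hxy, add_comm]) ?_
    rintro rfl
    rw [isUnit_iff_toZMod_ne_zero, ← hxy] at hc
    exact hc (by simp [not_ne_iff.mp hx])
  obtain ⟨A, rfl⟩ := ZMod.ringHom_surjective toZMod x
  obtain ⟨B, rfl⟩ := ZMod.ringHom_surjective toZMod y
  have hA : IsUnit (2 * A) := (isUnit_two hp).mul (isUnit_iff_toZMod_ne_zero.mpr hx)
  obtain ⟨T, hT⟩ := HenselianRing.isSquare_of_sq_sub_mem (I := maximalIdeal ℤ_[p]) hA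
    (c := c - B ^ 2) (by rw [← ker_toZMod, RingHom.mem_ker]; simp [← hxy])
  exact ⟨T, B, by linear_combination hT⟩

theorem Padic.exists_sq_add_sq_of_norm_eq_one {p : ℕ} [Fact p.Prime] (hp : p ≠ 2) {u : ℚ_[p]}
    (hu : ‖u‖ = 1) : ∃ a b : ℚ_[p], u = a ^ 2 + b ^ 2 := by
  obtain ⟨a, b, hab⟩ := PadicInt.exists_sq_add_sq_of_isUnit hp
    ((PadicInt.isUnit_iff (z := ⟨u, hu.le⟩)).mpr hu)
  exact ⟨a, b, by simpa using congrArg ((↑) : ℤ_[p] → ℚ_[p]) hab⟩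

theorem all_axis_classes_realized_general
    (p : ℕ) [Fact p.Prime] (hp : p ≠ 2)
    (u : ℚ_[p]) (hu : ‖u‖ = 1)
    (v : ℚ_[p])
    (hv1 : p % 4 = 1 → v = -u) (hv3 : p % 4 = 3 → v = -1)
    (Q : (Fin 3 → ℚ_[p]) → ℚ_[p])
    (hQ : ∀ x : Fin 3 → ℚ_[p], Q x = x 0 ^ 2 - v * x 1 ^ 2 + (p : ℚ_[p]) * x 2 ^ 2) :
    ∀ α ∈ ({-v, (p : ℚ_[p]), u * (p : ℚ_[p])} : Set ℚ_[p]),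
      ∃ n : Fin 3 → ℚ_[p], n ≠ 0 ∧
        ∃ s : ℚ_[p], s ≠ 0 ∧ Q n = -v * (p : ℚ_[p]) * α * s ^ 2 := by
  have hp4 : p % 4 = 1 ∨ p % 4 = 3 := by
    have := (Fact.out : p.Prime).eq_two_or_odd; omega
  have hu0 : u ≠ 0 := norm_ne_zero_iff.mp (by simp [hu])
  have hp0 : (p : ℚ_[p]) ≠ 0 := Nat.cast_ne_zero.mpr (Fact.out : p.Prime).ne_zero
  have hv0 : v ≠ 0 := by
    rcases hp4 with h | h
    · simpa [hv1 h] using hu0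
    · simp [hv3 h]
  have hQvec (a b c : ℚ_[p]) : Q ![a, b, c] = a ^ 2 - v * b ^ 2 + p * c ^ 2 := hQ _
  simp only [Set.mem_insert_iff, Set.mem_singleton_iff]
  rintro α (rfl | rfl | rfl)
  · exact ⟨![0, 0, v], by simp [hv0], 1, one_ne_zero, by rw [hQvec]; ring⟩
  · exact ⟨![0, p, 0], by simp [hp0], 1, one_ne_zero, by rw [hQvec]; ring⟩
  rcases hp4 with h | h
  · exact ⟨![u * p, 0, 0], by simp [hu0, hp0], 1, one_ne_zero, by rw [hQvec, hv1 h]; ring⟩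
  · obtain ⟨a, b, hab⟩ := Padic.exists_sq_add_sq_of_norm_eq_one hp hu
    refine ⟨![a * p, b * p, 0], ?_, 1, one_ne_zero, by rw [hQvec, hv3 h, hab]; ring⟩
    intro hn
    have ha : a = 0 := by simpa [hp0] using congrFun hn 0
    have hb : b = 0 := by simpa [hp0] using congrFun hn 1
    exact hu0 (by simp [hab, ha, hb])

/-- For `p` odd, `u` a non-square p-adic unit, and `v = -u` for
`p ≡ 1 (mod 4)`, `v = -1` for `p ≡ 3 (mod 4)`, every `α ∈ {-v, p, u·p}` is
realized: there are a nonzero vector `n ∈ ℚ_p³` and a nonzero scalar `s` with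
`Q₊(n) = -v·p·α·s²`. -/
theorem all_axis_classes_realized
    (p : ℕ) [Fact p.Prime] (hp : p ≠ 2)
    (u : ℚ_[p]) (hu : ‖u‖ = 1) (husq : ¬ IsSquare u)
    (v : ℚ_[p])
    (hv1 : p % 4 = 1 → v = -u) (hv3 : p % 4 = 3 → v = -1)
    (Q : (Fin 3 → ℚ_[p]) → ℚ_[p])
    (hQ : ∀ x : Fin 3 → ℚ_[p], Q x = x 0 ^ 2 - v * x 1 ^ 2 + (p : ℚ_[p]) * x 2 ^ 2) :
    ∀ α ∈ ({-v, (p : ℚ_[p]), u * (p : ℚ_[p])} : Set ℚ_[p]),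
      ∃ n : Fin 3 → ℚ_[p], n ≠ 0 ∧
        ∃ s : ℚ_[p], s ≠ 0 ∧ Q n = -v * (p : ℚ_[p]) * α * s ^ 2 :=
  all_axis_classes_realized_general p hp u hu v hv1 hv3 Q hQ
end

section
/- Let p be an odd prime, v ∈ ℚ_p a p-adic unit that is not a square in ℚ_p, A = diag(1, -v, p), and SO(3)_p = {L ∈ M₃(ℚ_p) : LᵀAL = A, det L = 1}. Let e₁, e₂, e₃ be the standard basis vectors of ℚ_p³. Then every M ∈ SO(3)_p admits a Cardano decomposition in each of the following four orderings: (a) M = Z·Y·X, (b) M = Z'·X'·Y', (c) M = X''·Y''·Z'', (d) M = Y'''·X'''·Z''', where in each product every factor belongs to SO(3)_p and each factor labelled X (resp. Y, Z), with any number of primes, fixes e₁ (resp. e₂, e₃), i.e., X e₁ = e₁, Y e₂ = e₂, Z e₃ = e₃. -/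
open Matrix


section CardanoAux

variable {p : ℕ} [Fact p.Prime]

private lemma cardano_ppos : (0:ℝ) < (p:ℝ) := by exact_mod_cast (Fact.out : p.Prime).pos
private lemma cardano_pgt1 : (1:ℝ) < (p:ℝ) := by exact_mod_cast (Fact.out : p.Prime).one_lt

private lemma padic_sq (hp : p ≠ 2) (w : ℚ_[p]) (hw : ‖w - 1‖ < 1) :
    ∃ a : ℚ_[p], a * a = w ∧ a ≠ 0 := by
  have hw1 : ‖w‖ ≤ 1 := by
    calc ‖w‖ = ‖(w - 1) + 1‖ := by ring_nf
    _ ≤ max ‖w - 1‖ ‖(1:ℚ_[p])‖ := Padic.nonarchimedean _ _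
    _ ≤ 1 := by simp [max_le_iff]; exact hw.le
  have hwne : w ≠ 0 := by
    rintro rfl; simp at hw
  set W : ℤ_[p] := ⟨w, hw1⟩ with hW
  have h2 : ‖(2 : ℤ_[p])‖ = 1 := by
    rcases lt_or_eq_of_le ((2:ℤ_[p]).norm_le_one) with h | h
    · exfalso
      have hdvd : (p:ℤ) ∣ 2 := by
        have := (PadicInt.norm_int_lt_one_iff_dvd 2).mp (by exact_mod_cast h)
        exact_mod_cast this
      have hp2 : p ∣ 2 := by exact_mod_cast hdvd
      have := (Fact.out : p.Prime).two_le
      have hle : p ≤ 2 := Nat.le_of_dvd (by norm_num) hp2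
      omega
    · exact h
  set F : Polynomial ℤ_[p] := Polynomial.X ^ 2 - Polynomial.C W with hF
  have heval : F.eval 1 = 1 - W := by simp [hF]
  have hderiv : F.derivative.eval 1 = 2 := by
    simp [hF, Polynomial.derivative_pow]
  have hnorm : ‖F.eval 1‖ < ‖F.derivative.eval 1‖ ^ 2 := by
    rw [heval, hderiv, h2]
    have : ‖(1 : ℤ_[p]) - W‖ = ‖w - 1‖ := by
      rw [PadicInt.norm_def, ← norm_neg]
      push_cast
      congr 1
      simp [hW]
    simpa [this] using hw
  obtain ⟨z, hz, -⟩ := hensels_lemma hnorm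
  have hzW : z * z = W := by
    have := hz
    simp [hF, sub_eq_zero, sq] at this
    exact this
  refine ⟨(z : ℚ_[p]), ?_, ?_⟩
  · have := congrArg (fun x : ℤ_[p] => (x : ℚ_[p])) hzW
    simpa [hW] using this
  · intro h0
    have hz0 : z = 0 := Subtype.ext (by simpa using h0)
    rw [hz0] at hzW
    apply hwne
    have := congrArg (fun x : ℤ_[p] => (x : ℚ_[p])) hzW
    simpa [hW] using this.symm

private lemma norm_tt_sub_v (hp : p ≠ 2) {v : ℚ_[p]} (hv : ‖v‖ = 1) (hvsq : ¬ IsSquare v)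
    {t : ℚ_[p]} (ht : ‖t‖ = 1) : ‖t * t - v‖ = 1 := by
  have hle : ‖t * t - v‖ ≤ 1 := by
    calc ‖t*t - v‖ = ‖t*t + (-v)‖ := by ring_nf
    _ ≤ max ‖t*t‖ ‖-v‖ := Padic.nonarchimedean _ _
    _ ≤ 1 := by simp [max_le_iff, norm_mul, ht, hv]
  rcases lt_or_eq_of_le hle with h | h
  · exfalso
    have htne : t ≠ 0 := by intro h0; simp [h0] at ht
    have hw : ‖v / (t * t) - 1‖ < 1 := by
      have : v / (t*t) - 1 = -(t*t - v) / (t*t) := by field_simp; ring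
      rw [this, norm_div, norm_neg, norm_mul, ht]
      simpa using h
    obtain ⟨a, ha, hane⟩ := padic_sq hp _ hw
    apply hvsq
    refine ⟨t * a, ?_⟩
    have : v = (t*t) * (a*a) := by rw [ha]; field_simp
    rw [this]; ring
  · exact h

private lemma norm_xx_sub_vyy (hp : p ≠ 2) {v : ℚ_[p]} (hv : ‖v‖ = 1) (hvsq : ¬ IsSquare v)
    (x y : ℚ_[p]) : ‖x * x - v * (y * y)‖ = (max ‖x‖ ‖y‖) ^ 2 := by
  rcases lt_trichotomy ‖x‖ ‖y‖ with h | h | h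
  · have hne : ‖x * x‖ ≠ ‖-(v * (y * y))‖ := by
      rw [norm_neg, norm_mul, norm_mul, norm_mul, hv, one_mul]
      exact ne_of_lt (by nlinarith [norm_nonneg x, norm_nonneg y])
    calc ‖x*x - v*(y*y)‖ = ‖x*x + -(v*(y*y))‖ := by ring_nf
    _ = max ‖x*x‖ ‖-(v*(y*y))‖ := Padic.add_eq_max_of_ne hne
    _ = (max ‖x‖ ‖y‖)^2 := by
        rw [norm_neg, norm_mul, norm_mul, norm_mul, hv, one_mul,
          max_eq_right (by nlinarith [norm_nonneg x, norm_nonneg y]), max_eq_right h.le]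
        ring
  · rcases eq_or_ne y 0 with rfl | hy
    · simp only [norm_zero] at h
      have hx : x = 0 := norm_eq_zero.mp h
      simp [hx]
    · have hyn : ‖y‖ ≠ 0 := by simpa using hy
      have ht : ‖x / y‖ = 1 := by rw [norm_div, h, div_self hyn]
      have hfac : x*x - v*(y*y) = (y*y) * ((x/y)*(x/y) - v) := by field_simp
      rw [hfac, norm_mul, norm_mul, norm_tt_sub_v hp hv hvsq ht, h, max_self]
      ring
  · have hne : ‖x * x‖ ≠ ‖-(v * (y * y))‖ := by
      rw [norm_neg, norm_mul, norm_mul, norm_mul, hv, one_mul]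
      exact ne_of_gt (by nlinarith [norm_nonneg x, norm_nonneg y])
    calc ‖x*x - v*(y*y)‖ = ‖x*x + -(v*(y*y))‖ := by ring_nf
    _ = max ‖x*x‖ ‖-(v*(y*y))‖ := Padic.add_eq_max_of_ne hne
    _ = (max ‖x‖ ‖y‖)^2 := by
        rw [norm_neg, norm_mul, norm_mul, norm_mul, hv, one_mul,
          max_eq_left (by nlinarith [norm_nonneg x, norm_nonneg y]), max_eq_left h.le]
        ring

private lemma norm_p_zz {z : ℚ_[p]} (hz : z ≠ 0) :
    ∃ j : ℤ, ‖(p:ℚ_[p]) * (z*z)‖ = (p:ℝ) ^ (2*j - 1) := by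
  refine ⟨-z.valuation, ?_⟩
  rw [norm_mul, norm_mul, Padic.norm_p, Padic.norm_eq_zpow_neg_valuation hz]
  rw [← _root_.zpow_neg_one, ← zpow_add₀ (ne_of_gt (cardano_ppos (p := p))),
    ← zpow_add₀ (ne_of_gt (cardano_ppos (p := p)))]
  congr 1
  ring

private lemma norm_s_pow (hp : p ≠ 2) {v : ℚ_[p]} (hv : ‖v‖ = 1) (hvsq : ¬ IsSquare v)
    {x y : ℚ_[p]} (hxy : ¬(x = 0 ∧ y = 0)) :
    ∃ k : ℤ, max ‖x‖ ‖y‖ = (p:ℝ) ^ k ∧ ‖x * x - v * (y * y)‖ = (p:ℝ) ^ (2*k) := by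
  have hm : ∃ k : ℤ, max ‖x‖ ‖y‖ = (p:ℝ) ^ k := by
    rcases max_cases ‖x‖ ‖y‖ with ⟨h1, h2⟩ | ⟨h1, h2⟩
    · have hx : x ≠ 0 := by
        intro h0
        apply hxy
        refine ⟨h0, ?_⟩
        rw [h0, norm_zero] at h2
        exact norm_eq_zero.mp (le_antisymm h2 (norm_nonneg y))
      exact ⟨-x.valuation, by rw [h1, Padic.norm_eq_zpow_neg_valuation hx]⟩
    · have hy : y ≠ 0 := by
        intro h0
        rw [h0, norm_zero] at h2
        exact absurd h2 (not_lt.mpr (norm_nonneg x))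
      exact ⟨-y.valuation, by rw [h1, Padic.norm_eq_zpow_neg_valuation hy]⟩
  obtain ⟨k, hk⟩ := hm
  refine ⟨k, hk, ?_⟩
  rw [norm_xx_sub_vyy hp hv hvsq, hk, ← _root_.zpow_natCast ((p:ℝ)^k) 2, ← _root_.zpow_mul]
  congr 1; ring

private lemma key1 (hp : p ≠ 2) {v : ℚ_[p]} (hv : ‖v‖ = 1) (hvsq : ¬ IsSquare v)
    {x y z ε : ℚ_[p]} (h : x*x - v*(y*y) + (p:ℚ_[p])*(z*z) = ε) (hε : ‖ε‖ = 1) :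
    ‖(p:ℚ_[p])*(z*z)‖ < 1 := by
  rcases eq_or_ne z 0 with rfl | hz
  · simp
  by_contra hcon
  push_neg at hcon
  obtain ⟨j, hj⟩ := norm_p_zz (p := p) hz
  have hne1 : ‖(p:ℚ_[p])*(z*z)‖ ≠ 1 := by
    rw [hj]
    intro hEq
    have : (2*j - 1 : ℤ) = 0 := by
      have := zpow_right_injective₀ (cardano_ppos (p:=p)) (ne_of_gt (cardano_pgt1 (p:=p)))
        (hEq.trans (zpow_zero _).symm)
      exact this
    omega
  have hgt : 1 < ‖(p:ℚ_[p])*(z*z)‖ := lt_of_le_of_ne hcon (Ne.symm hne1)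
  rcases Classical.em (x = 0 ∧ y = 0) with ⟨rfl, rfl⟩ | hxy
  · rw [show ε = (p:ℚ_[p])*(z*z) by rw [← h]; ring] at hε
    rw [hε] at hgt; exact lt_irrefl _ hgt
  · obtain ⟨k, -, hs⟩ := norm_s_pow hp hv hvsq hxy
    have hne : ‖x*x - v*(y*y)‖ ≠ ‖(p:ℚ_[p])*(z*z)‖ := by
      rw [hs, hj]
      intro hEq
      have := zpow_right_injective₀ (cardano_ppos (p:=p)) (ne_of_gt (cardano_pgt1 (p:=p))) hEq
      omega
    have := Padic.add_eq_max_of_ne hne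
    rw [h, hε] at this
    have : (1:ℝ) ≥ ‖(p:ℚ_[p])*(z*z)‖ := by rw [this]; exact le_max_right _ _
    linarith

private lemma key2 (hp : p ≠ 2) {v : ℚ_[p]} (hv : ‖v‖ = 1) (hvsq : ¬ IsSquare v)
    {x y z ε : ℚ_[p]} (h : x*x - v*(y*y) + (p:ℚ_[p])*(z*z) = ε) (hε : ‖ε‖ = ((p:ℝ))⁻¹) :
    ‖x‖ ≤ ((p:ℝ))⁻¹ ∧ ‖y‖ ≤ ((p:ℝ))⁻¹ := by
  have hmax : max ‖x‖ ‖y‖ ≤ ((p:ℝ))⁻¹ := by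
    by_contra hcon
    push_neg at hcon
    have hxy : ¬(x = 0 ∧ y = 0) := by
      rintro ⟨rfl, rfl⟩
      simp at hcon
      have hppos : (0:ℝ) < ((p:ℝ))⁻¹ := by
        have := cardano_ppos (p:=p); positivity
      linarith
    obtain ⟨k, hk, hs⟩ := norm_s_pow hp hv hvsq hxy
    have hk0 : 0 ≤ k := by
      have h1 : (p:ℝ)^(-1:ℤ) < (p:ℝ)^k := by rw [_root_.zpow_neg_one, ← hk]; exact hcon
      have := (zpow_lt_zpow_iff_right₀ (cardano_pgt1 (p:=p))).mp h1
      omega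
    have hs1 : (1:ℝ) ≤ ‖x*x - v*(y*y)‖ := by
      rw [hs]
      calc (1:ℝ) = (p:ℝ)^(0:ℤ) := by simp
      _ ≤ (p:ℝ)^(2*k) := by
          apply zpow_le_zpow_right₀ (le_of_lt (cardano_pgt1 (p:=p)))
          omega
    have hlt : ((p:ℝ))⁻¹ < 1 := by
      rw [inv_lt_one_iff₀]; exact Or.inr (cardano_pgt1 (p:=p))
    rcases eq_or_ne z 0 with rfl | hz
    · rw [show ε = x*x - v*(y*y) by rw [← h]; ring] at hε
      rw [hε] at hs1; linarith
    · obtain ⟨j, hj⟩ := norm_p_zz (p := p) hz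
      have hne : ‖x*x - v*(y*y)‖ ≠ ‖(p:ℚ_[p])*(z*z)‖ := by
        rw [hs, hj]
        intro hEq
        have := zpow_right_injective₀ (cardano_ppos (p:=p)) (ne_of_gt (cardano_pgt1 (p:=p))) hEq
        omega
      have hEqmax := Padic.add_eq_max_of_ne hne
      rw [h, hε] at hEqmax
      have : (1:ℝ) ≤ ((p:ℝ))⁻¹ := le_trans hs1 (by rw [hEqmax]; exact le_max_left _ _)
      linarith
  exact ⟨le_trans (le_max_left _ _) hmax, le_trans (le_max_right _ _) hmax⟩

noncomputable def Zm (v α β : ℚ_[p]) : Matrix (Fin 3) (Fin 3) ℚ_[p] :=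
  !![α, v*β, 0; β, α, 0; 0,0,1]
noncomputable def Ym (α γ : ℚ_[p]) : Matrix (Fin 3) (Fin 3) ℚ_[p] :=
  !![α, 0, -(p:ℚ_[p])*γ; 0,1,0; γ,0,α]
noncomputable def Xm (v β γ : ℚ_[p]) : Matrix (Fin 3) (Fin 3) ℚ_[p] :=
  !![1,0,0; 0,β,(p:ℚ_[p])*γ/v; 0,γ,β]

def isSO (v : ℚ_[p]) (L : Matrix (Fin 3) (Fin 3) ℚ_[p]) : Prop :=
  Lᵀ * (Matrix.diagonal ![(1:ℚ_[p]),-v,(p:ℚ_[p])]) * L = Matrix.diagonal ![(1:ℚ_[p]),-v,(p:ℚ_[p])]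
    ∧ L.det = 1

set_option linter.unreachableTactic false
set_option linter.unusedTactic false

private lemma Zm_mem (v : ℚ_[p]) {α β : ℚ_[p]} (hc : α*α - v*(β*β) = 1) : isSO v (Zm v α β) := by
  constructor
  · ext i j
    fin_cases i <;> fin_cases j <;>
      simp [Zm, Matrix.mul_apply, Fin.sum_univ_three, Matrix.transpose_apply, Matrix.cons_val_two,
        Matrix.tail_cons, Matrix.head_cons, Matrix.vecHead, Matrix.vecTail, Matrix.diagonal] <;>
      first
        | ring1
        | linear_combination hc
        | linear_combination (-v)*hc
  · simp [Zm, Matrix.det_fin_three]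
    linear_combination hc

private lemma Ym_mem (v : ℚ_[p]) {α γ : ℚ_[p]} (hc : α*α + (p:ℚ_[p])*(γ*γ) = 1) :
    isSO v (Ym α γ) := by
  constructor
  · ext i j
    fin_cases i <;> fin_cases j <;>
      simp [Ym, Matrix.mul_apply, Fin.sum_univ_three, Matrix.transpose_apply, Matrix.cons_val_two,
        Matrix.tail_cons, Matrix.head_cons, Matrix.vecHead, Matrix.vecTail, Matrix.diagonal] <;>
      first
        | ring1
        | linear_combination hc
        | linear_combination (-(p:ℚ_[p]))*hc
        | linear_combination (p:ℚ_[p])*hc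
  · simp [Ym, Matrix.det_fin_three]
    linear_combination hc

private lemma Xm_mem {v : ℚ_[p]} (hv0 : v ≠ 0) {β γ : ℚ_[p]}
    (hc : -v*(β*β) + (p:ℚ_[p])*(γ*γ) = -v) : isSO v (Xm v β γ) := by
  constructor
  · ext i j
    fin_cases i <;> fin_cases j <;>
      simp [Xm, Matrix.mul_apply, Fin.sum_univ_three, Matrix.transpose_apply, Matrix.cons_val_two,
        Matrix.tail_cons, Matrix.head_cons, Matrix.vecHead, Matrix.vecTail, Matrix.diagonal] <;>
      first
        | ring1
        | linear_combination hc
        | linear_combination (-(p:ℚ_[p]))*hc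
        | linear_combination (p:ℚ_[p])*hc
        | (field_simp; first
            | ring1
            | linear_combination hc
            | linear_combination (-(p:ℚ_[p]))*hc
            | linear_combination (p:ℚ_[p])*hc
            | linear_combination v*hc
            | linear_combination (-v)*hc
            | linear_combination (p:ℚ_[p])*v*hc
            | linear_combination (-(p:ℚ_[p]))*v*hc)
  · simp [Xm, Matrix.det_fin_three]
    field_simp
    linear_combination -hc

private lemma Zm_inv (v : ℚ_[p]) {α β : ℚ_[p]} (hc : α*α - v*(β*β) = 1) :
    Zm v α β * Zm v α (-β) = 1 := by
  ext i j
  fin_cases i <;> fin_cases j <;>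
    simp [Zm, Matrix.mul_apply, Fin.sum_univ_three, Matrix.cons_val_two, Matrix.tail_cons,
      Matrix.head_cons, Matrix.vecHead, Matrix.vecTail, Matrix.one_apply] <;>
    first
      | ring1
      | linear_combination hc
      | linear_combination (-v)*hc
      | linear_combination v*hc

private lemma Ym_inv (v : ℚ_[p]) {α γ : ℚ_[p]} (hc : α*α + (p:ℚ_[p])*(γ*γ) = 1) :
    Ym α γ * Ym α (-γ) = 1 := by
  ext i j
  fin_cases i <;> fin_cases j <;>
    simp [Ym, Matrix.mul_apply, Fin.sum_univ_three, Matrix.cons_val_two, Matrix.tail_cons,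
      Matrix.head_cons, Matrix.vecHead, Matrix.vecTail, Matrix.one_apply] <;>
    first
      | ring1
      | linear_combination hc
      | linear_combination (-(p:ℚ_[p]))*hc
      | linear_combination (p:ℚ_[p])*hc

private lemma Xm_inv {v : ℚ_[p]} (hv0 : v ≠ 0) {β γ : ℚ_[p]}
    (hc : -v*(β*β) + (p:ℚ_[p])*(γ*γ) = -v) : Xm v β γ * Xm v β (-γ) = 1 := by
  ext i j
  fin_cases i <;> fin_cases j <;>
    simp [Xm, Matrix.mul_apply, Fin.sum_univ_three, Matrix.cons_val_two, Matrix.tail_cons,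
      Matrix.head_cons, Matrix.vecHead, Matrix.vecTail, Matrix.one_apply] <;>
    first
      | ring1
      | (field_simp; first
          | ring1
          | linear_combination hc
          | linear_combination (-hc)
          | linear_combination v*hc
          | linear_combination (-v)*hc)

private lemma Zm_fix (v α β : ℚ_[p]) : (Zm v α β).mulVec (Pi.single 2 1) = Pi.single 2 1 := by
  funext i
  fin_cases i <;> simp [Zm, Matrix.mulVec, dotProduct, Fin.sum_univ_three, Pi.single_apply]

private lemma Ym_fix (α γ : ℚ_[p]) : (Ym α γ).mulVec (Pi.single 1 1) = Pi.single 1 1 := by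
  funext i
  fin_cases i <;> simp [Ym, Matrix.mulVec, dotProduct, Fin.sum_univ_three, Pi.single_apply]

private lemma Xm_fix (v β γ : ℚ_[p]) : (Xm v β γ).mulVec (Pi.single 0 1) = Pi.single 0 1 := by
  funext i
  fin_cases i <;> simp [Xm, Matrix.mulVec, dotProduct, Fin.sum_univ_three, Pi.single_apply]

private lemma mem_mul {v : ℚ_[p]} {L K : Matrix (Fin 3) (Fin 3) ℚ_[p]}
    (hL : isSO v L) (hK : isSO v K) : isSO v (L*K) := by
  constructor
  · calc (L*K)ᵀ * (Matrix.diagonal ![(1:ℚ_[p]),-v,(p:ℚ_[p])]) * (L*K)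
        = Kᵀ * (Lᵀ * (Matrix.diagonal ![(1:ℚ_[p]),-v,(p:ℚ_[p])]) * L) * K := by
          rw [Matrix.transpose_mul]; noncomm_ring
    _ = Kᵀ * (Matrix.diagonal ![(1:ℚ_[p]),-v,(p:ℚ_[p])]) * K := by rw [hL.1]
    _ = (Matrix.diagonal ![(1:ℚ_[p]),-v,(p:ℚ_[p])]) := hK.1
  · rw [Matrix.det_mul, hL.2, hK.2, one_mul]

end CardanoAux

section Cases
variable {p : ℕ} [Fact p.Prime]

private lemma caseZYX (hp : p ≠ 2) {v : ℚ_[p]} (hv : ‖v‖ = 1) (hvsq : ¬IsSquare v)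
    {M : Matrix (Fin 3) (Fin 3) ℚ_[p]} (hM : isSO v M) :
    ∃ Z Y X, isSO v Z ∧ isSO v Y ∧ isSO v X ∧
      Z.mulVec (Pi.single 2 1) = Pi.single 2 1 ∧ Y.mulVec (Pi.single 1 1) = Pi.single 1 1 ∧
      X.mulVec (Pi.single 0 1) = Pi.single 0 1 ∧ M = Z * Y * X := by
  set u0 := M 0 0 with hu0
  set u1 := M 1 0 with hu1
  set u2 := M 2 0 with hu2
  have hQ : u0*u0 - v*(u1*u1) + (p:ℚ_[p])*(u2*u2) = 1 := by
    have := congrFun (congrFun hM.1 0) 0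
    simp [Matrix.mul_apply, Fin.sum_univ_three, Matrix.diagonal] at this
    linear_combination this
  have hsmall : ‖(p:ℚ_[p])*(u2*u2)‖ < 1 := key1 hp hv hvsq hQ norm_one
  obtain ⟨a, ha, ha0⟩ := padic_sq hp (1 - (p:ℚ_[p])*(u2*u2)) (by
    rw [show (1:ℚ_[p]) - (p:ℚ_[p])*(u2*u2) - 1 = -((p:ℚ_[p])*(u2*u2)) by ring, norm_neg]
    exact hsmall)
  have hcY : a*a + (p:ℚ_[p])*(u2*u2) = 1 := by linear_combination ha
  have hcZ : (u0/a)*(u0/a) - v*((u1/a)*(u1/a)) = 1 := by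
    field_simp
    linear_combination hQ - ha
  have hcZ' : (u0/a)*(u0/a) - v*((-(u1/a))*(-(u1/a))) = 1 := by linear_combination hcZ
  have hcY' : a*a + (p:ℚ_[p])*((-u2)*(-u2)) = 1 := by linear_combination hcY
  refine ⟨Zm v (u0/a) (u1/a), Ym a u2, Ym a (-u2) * (Zm v (u0/a) (-(u1/a)) * M),
    Zm_mem v hcZ, Ym_mem v hcY, mem_mul (Ym_mem v hcY') (mem_mul (Zm_mem v hcZ') hM),
    Zm_fix v _ _, Ym_fix _ _, ?_, ?_⟩
  · have hcol : M.mulVec (Pi.single 0 1) = ![u0, u1, u2] := by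
      funext i
      fin_cases i <;> simp [Matrix.mulVec, dotProduct, Fin.sum_univ_three, Pi.single_apply, hu0, hu1, hu2]
    have hstep : (Zm v (u0/a) (-(u1/a))).mulVec ![u0,u1,u2] = ![a, 0, u2] := by
      funext i
      fin_cases i <;>
        simp [Zm, Matrix.mulVec, dotProduct, Fin.sum_univ_three, Matrix.cons_val_two,
          Matrix.tail_cons, Matrix.head_cons] <;>
        (field_simp; first | ring1 | linear_combination hQ - ha | linear_combination (0:ℚ_[p])*hQ)
    have hstep2 : (Ym a (-u2)).mulVec ![a,0,u2] = Pi.single 0 1 := by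
      funext i
      fin_cases i <;>
        simp [Ym, Matrix.mulVec, dotProduct, Fin.sum_univ_three, Matrix.cons_val_two,
          Matrix.tail_cons, Matrix.head_cons, Pi.single_apply] <;>
        first | ring1 | linear_combination hcY | linear_combination (0:ℚ_[p])*hQ
    rw [← Matrix.mulVec_mulVec, ← Matrix.mulVec_mulVec, hcol, hstep, hstep2]
  · have e1 : Ym a u2 * Ym a (-u2) = 1 := Ym_inv v hcY
    have e2 : Zm v (u0/a) (u1/a) * Zm v (u0/a) (-(u1/a)) = 1 := Zm_inv v hcZ
    calc M = (Zm v (u0/a) (u1/a) * Zm v (u0/a) (-(u1/a))) * M := by rw [e2, one_mul]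
    _ = (Zm v (u0/a) (u1/a) * ((Ym a u2 * Ym a (-u2)) * Zm v (u0/a) (-(u1/a)))) * M := by
        rw [e1, one_mul]
    _ = Zm v (u0/a) (u1/a) * Ym a u2 * (Ym a (-u2) * (Zm v (u0/a) (-(u1/a)) * M)) := by
        noncomm_ring

private lemma caseZXY (hp : p ≠ 2) {v : ℚ_[p]} (hv : ‖v‖ = 1) (hvsq : ¬IsSquare v)
    {M : Matrix (Fin 3) (Fin 3) ℚ_[p]} (hM : isSO v M) :
    ∃ Z X Y, isSO v Z ∧ isSO v X ∧ isSO v Y ∧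
      Z.mulVec (Pi.single 2 1) = Pi.single 2 1 ∧ X.mulVec (Pi.single 0 1) = Pi.single 0 1 ∧
      Y.mulVec (Pi.single 1 1) = Pi.single 1 1 ∧ M = Z * X * Y := by
  have hv0 : v ≠ 0 := by intro h; rw [h] at hv; simp at hv
  set u0 := M 0 1 with hu0
  set u1 := M 1 1 with hu1
  set u2 := M 2 1 with hu2
  have hQ : u0*u0 - v*(u1*u1) + (p:ℚ_[p])*(u2*u2) = -v := by
    have := congrFun (congrFun hM.1 1) 1
    simp [Matrix.mul_apply, Fin.sum_univ_three, Matrix.diagonal] at this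
    linear_combination this
  have hsmall : ‖(p:ℚ_[p])*(u2*u2)‖ < 1 := key1 hp hv hvsq hQ (by rw [norm_neg, hv])
  obtain ⟨b, hb, hb0⟩ := padic_sq hp (1 + (p:ℚ_[p])*(u2*u2)/v) (by
    rw [show (1:ℚ_[p]) + (p:ℚ_[p])*(u2*u2)/v - 1 = ((p:ℚ_[p])*(u2*u2))/v by ring,
      norm_div, hv, div_one]
    exact hsmall)
  have hvb : v*(b*b) = v + (p:ℚ_[p])*(u2*u2) := by rw [hb]; field_simp
  have hcX : -v*(b*b) + (p:ℚ_[p])*(u2*u2) = -v := by linear_combination -hvb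
  have hcX' : -v*(b*b) + (p:ℚ_[p])*((-u2)*(-u2)) = -v := by linear_combination hcX
  have hcZ : (u1/b)*(u1/b) - v*((u0/(v*b))*(u0/(v*b))) = 1 := by
    field_simp
    linear_combination -hQ - hvb
  have hcZ' : (u1/b)*(u1/b) - v*((-(u0/(v*b)))*(-(u0/(v*b)))) = 1 := by linear_combination hcZ
  refine ⟨Zm v (u1/b) (u0/(v*b)), Xm v b u2, Xm v b (-u2) * (Zm v (u1/b) (-(u0/(v*b))) * M),
    Zm_mem v hcZ, Xm_mem hv0 hcX, mem_mul (Xm_mem hv0 hcX') (mem_mul (Zm_mem v hcZ') hM),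
    Zm_fix v _ _, Xm_fix v _ _, ?_, ?_⟩
  · have hcol : M.mulVec (Pi.single 1 1) = ![u0, u1, u2] := by
      funext i
      fin_cases i <;> simp [Matrix.mulVec, dotProduct, Fin.sum_univ_three, Pi.single_apply, hu0, hu1, hu2]
    have hstep : (Zm v (u1/b) (-(u0/(v*b)))).mulVec ![u0,u1,u2] = ![0, b, u2] := by
      funext i
      fin_cases i <;>
        simp [Zm, Matrix.mulVec, dotProduct, Fin.sum_univ_three, Matrix.cons_val_two,
          Matrix.tail_cons, Matrix.head_cons] <;>
        (field_simp; first | ring1 | linear_combination -hQ - hvb | linear_combination (0:ℚ_[p])*hQ)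
    have hstep2 : (Xm v b (-u2)).mulVec ![0,b,u2] = Pi.single 1 1 := by
      funext i
      fin_cases i <;>
        simp [Xm, Matrix.mulVec, dotProduct, Fin.sum_univ_three, Matrix.cons_val_two,
          Matrix.tail_cons, Matrix.head_cons, Pi.single_apply] <;>
        first
          | ring1
          | (field_simp; first | ring1 | linear_combination hvb | linear_combination -hvb | linear_combination (0:ℚ_[p])*hQ)
    rw [← Matrix.mulVec_mulVec, ← Matrix.mulVec_mulVec, hcol, hstep, hstep2]
  · have e1 : Xm v b u2 * Xm v b (-u2) = 1 := Xm_inv hv0 hcX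
    have e2 : Zm v (u1/b) (u0/(v*b)) * Zm v (u1/b) (-(u0/(v*b))) = 1 := Zm_inv v hcZ
    calc M = (Zm v (u1/b) (u0/(v*b)) * Zm v (u1/b) (-(u0/(v*b)))) * M := by rw [e2, one_mul]
    _ = (Zm v (u1/b) (u0/(v*b)) * ((Xm v b u2 * Xm v b (-u2)) * Zm v (u1/b) (-(u0/(v*b))))) * M := by
        rw [e1, one_mul]
    _ = Zm v (u1/b) (u0/(v*b)) * Xm v b u2 * (Xm v b (-u2) * (Zm v (u1/b) (-(u0/(v*b))) * M)) := by
        noncomm_ring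

private lemma caseXYZ (hp : p ≠ 2) {v : ℚ_[p]} (hv : ‖v‖ = 1) (hvsq : ¬IsSquare v)
    {M : Matrix (Fin 3) (Fin 3) ℚ_[p]} (hM : isSO v M) :
    ∃ X Y Z, isSO v X ∧ isSO v Y ∧ isSO v Z ∧
      X.mulVec (Pi.single 0 1) = Pi.single 0 1 ∧ Y.mulVec (Pi.single 1 1) = Pi.single 1 1 ∧
      Z.mulVec (Pi.single 2 1) = Pi.single 2 1 ∧ M = X * Y * Z := by
  have hv0 : v ≠ 0 := by intro h; rw [h] at hv; simp at hv
  have hp0 : (p:ℚ_[p]) ≠ 0 := Nat.cast_ne_zero.mpr (Fact.out : p.Prime).ne_zero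
  set u0 := M 0 2 with hu0
  set u1 := M 1 2 with hu1
  set u2 := M 2 2 with hu2
  have hQ : u0*u0 - v*(u1*u1) + (p:ℚ_[p])*(u2*u2) = (p:ℚ_[p]) := by
    have := congrFun (congrFun hM.1 2) 2
    simp [Matrix.mul_apply, Fin.sum_univ_three, Matrix.diagonal] at this
    linear_combination this
  obtain ⟨h0n, h1n⟩ := key2 hp hv hvsq hQ Padic.norm_p
  have hip : ((p:ℝ))⁻¹*(p:ℝ) = 1 := inv_mul_cancel₀ (ne_of_gt (cardano_ppos (p:=p)))
  have hilt : ((p:ℝ))⁻¹ < 1 := by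
    rw [inv_lt_one_iff₀]; exact Or.inr (cardano_pgt1 (p:=p))
  have hinn : (0:ℝ) ≤ ((p:ℝ))⁻¹ := by positivity
  obtain ⟨a, ha, ha0⟩ := padic_sq hp (1 - u0*u0/(p:ℚ_[p])) (by
    rw [show (1:ℚ_[p]) - u0*u0/(p:ℚ_[p]) - 1 = -(u0*u0/(p:ℚ_[p])) by ring, norm_neg,
      norm_div, norm_mul, Padic.norm_p, div_eq_mul_inv, inv_inv]
    nlinarith [norm_nonneg u0, mul_le_mul h0n h0n (norm_nonneg u0) hinn])
  have hpa : (p:ℚ_[p])*(a*a) = (p:ℚ_[p]) - u0*u0 := by rw [ha]; field_simp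
  have hcY : a*a + (p:ℚ_[p])*((-(u0/(p:ℚ_[p])))*(-(u0/(p:ℚ_[p])))) = 1 := by
    field_simp
    linear_combination hpa
  have hcY' : a*a + (p:ℚ_[p])*((-(-(u0/(p:ℚ_[p]))))*(-(-(u0/(p:ℚ_[p]))))) = 1 := by
    linear_combination hcY
  have hcX : -v*((u2/a)*(u2/a)) + (p:ℚ_[p])*((v*u1/((p:ℚ_[p])*a))*(v*u1/((p:ℚ_[p])*a))) = -v := by
    field_simp
    linear_combination -hQ + hpa
  have hcX' : -v*((u2/a)*(u2/a)) + (p:ℚ_[p])*((-(v*u1/((p:ℚ_[p])*a)))*(-(v*u1/((p:ℚ_[p])*a)))) = -v := by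
    linear_combination hcX
  refine ⟨Xm v (u2/a) (v*u1/((p:ℚ_[p])*a)), Ym a (-(u0/(p:ℚ_[p]))),
    Ym a (-(-(u0/(p:ℚ_[p])))) * (Xm v (u2/a) (-(v*u1/((p:ℚ_[p])*a))) * M),
    Xm_mem hv0 hcX, Ym_mem v hcY, mem_mul (Ym_mem v hcY') (mem_mul (Xm_mem hv0 hcX') hM),
    Xm_fix v _ _, Ym_fix _ _, ?_, ?_⟩
  · have hcol : M.mulVec (Pi.single 2 1) = ![u0, u1, u2] := by
      funext i
      fin_cases i <;> simp [Matrix.mulVec, dotProduct, Fin.sum_univ_three, Pi.single_apply, hu0, hu1, hu2]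
    have hstep : (Xm v (u2/a) (-(v*u1/((p:ℚ_[p])*a)))).mulVec ![u0,u1,u2] = ![u0, 0, a] := by
      funext i
      fin_cases i <;>
        simp [Xm, Matrix.mulVec, dotProduct, Fin.sum_univ_three, Matrix.cons_val_two,
          Matrix.tail_cons, Matrix.head_cons] <;>
        (field_simp; first | ring1 | linear_combination hQ - hpa | linear_combination (0:ℚ_[p])*hQ)
    have hstep2 : (Ym a (-(-(u0/(p:ℚ_[p]))))).mulVec ![u0,0,a] = Pi.single 2 1 := by
      funext i
      fin_cases i <;>
        simp [Ym, Matrix.mulVec, dotProduct, Fin.sum_univ_three, Matrix.cons_val_two,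
          Matrix.tail_cons, Matrix.head_cons, Pi.single_apply] <;>
        first
          | ring1
          | (field_simp; first | ring1 | linear_combination hpa | linear_combination -hpa | linear_combination (0:ℚ_[p])*hQ)
    rw [← Matrix.mulVec_mulVec, ← Matrix.mulVec_mulVec, hcol, hstep, hstep2]
  · have e1 : Ym a (-(u0/(p:ℚ_[p]))) * Ym a (-(-(u0/(p:ℚ_[p])))) = 1 := Ym_inv v hcY
    have e2 : Xm v (u2/a) (v*u1/((p:ℚ_[p])*a)) * Xm v (u2/a) (-(v*u1/((p:ℚ_[p])*a))) = 1 :=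
      Xm_inv hv0 hcX
    calc M = (Xm v (u2/a) (v*u1/((p:ℚ_[p])*a)) * Xm v (u2/a) (-(v*u1/((p:ℚ_[p])*a)))) * M := by
          rw [e2, one_mul]
    _ = (Xm v (u2/a) (v*u1/((p:ℚ_[p])*a)) * ((Ym a (-(u0/(p:ℚ_[p]))) * Ym a (-(-(u0/(p:ℚ_[p]))))) *
          Xm v (u2/a) (-(v*u1/((p:ℚ_[p])*a))))) * M := by rw [e1, one_mul]
    _ = Xm v (u2/a) (v*u1/((p:ℚ_[p])*a)) * Ym a (-(u0/(p:ℚ_[p]))) *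
          (Ym a (-(-(u0/(p:ℚ_[p])))) * (Xm v (u2/a) (-(v*u1/((p:ℚ_[p])*a))) * M)) := by
        noncomm_ring

private lemma caseYXZ (hp : p ≠ 2) {v : ℚ_[p]} (hv : ‖v‖ = 1) (hvsq : ¬IsSquare v)
    {M : Matrix (Fin 3) (Fin 3) ℚ_[p]} (hM : isSO v M) :
    ∃ Y X Z, isSO v Y ∧ isSO v X ∧ isSO v Z ∧
      Y.mulVec (Pi.single 1 1) = Pi.single 1 1 ∧ X.mulVec (Pi.single 0 1) = Pi.single 0 1 ∧
      Z.mulVec (Pi.single 2 1) = Pi.single 2 1 ∧ M = Y * X * Z := by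
  have hv0 : v ≠ 0 := by intro h; rw [h] at hv; simp at hv
  have hp0 : (p:ℚ_[p]) ≠ 0 := Nat.cast_ne_zero.mpr (Fact.out : p.Prime).ne_zero
  set u0 := M 0 2 with hu0
  set u1 := M 1 2 with hu1
  set u2 := M 2 2 with hu2
  have hQ : u0*u0 - v*(u1*u1) + (p:ℚ_[p])*(u2*u2) = (p:ℚ_[p]) := by
    have := congrFun (congrFun hM.1 2) 2
    simp [Matrix.mul_apply, Fin.sum_univ_three, Matrix.diagonal] at this
    linear_combination this
  obtain ⟨h0n, h1n⟩ := key2 hp hv hvsq hQ Padic.norm_p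
  have hip : ((p:ℝ))⁻¹*(p:ℝ) = 1 := inv_mul_cancel₀ (ne_of_gt (cardano_ppos (p:=p)))
  have hilt : ((p:ℝ))⁻¹ < 1 := by
    rw [inv_lt_one_iff₀]; exact Or.inr (cardano_pgt1 (p:=p))
  have hinn : (0:ℝ) ≤ ((p:ℝ))⁻¹ := by positivity
  obtain ⟨b, hb, hb0⟩ := padic_sq hp (1 + v*(u1*u1)/(p:ℚ_[p])) (by
    rw [show (1:ℚ_[p]) + v*(u1*u1)/(p:ℚ_[p]) - 1 = v*(u1*u1)/(p:ℚ_[p]) by ring,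
      norm_div, norm_mul, norm_mul, hv, one_mul, Padic.norm_p, div_eq_mul_inv, inv_inv]
    nlinarith [norm_nonneg u1, mul_le_mul h1n h1n (norm_nonneg u1) hinn])
  have hpb : (p:ℚ_[p])*(b*b) = (p:ℚ_[p]) + v*(u1*u1) := by rw [hb]; field_simp
  have hcY : (u2/b)*(u2/b) + (p:ℚ_[p])*((-(u0/((p:ℚ_[p])*b)))*(-(u0/((p:ℚ_[p])*b)))) = 1 := by
    field_simp
    linear_combination hQ - hpb
  have hcY' : (u2/b)*(u2/b) + (p:ℚ_[p])*((-(-(u0/((p:ℚ_[p])*b))))*(-(-(u0/((p:ℚ_[p])*b))))) = 1 := by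
    linear_combination hcY
  have hcX : -v*(b*b) + (p:ℚ_[p])*((v*u1/(p:ℚ_[p]))*(v*u1/(p:ℚ_[p]))) = -v := by
    field_simp
    linear_combination -hpb
  have hcX' : -v*(b*b) + (p:ℚ_[p])*((-(v*u1/(p:ℚ_[p])))*(-(v*u1/(p:ℚ_[p])))) = -v := by
    linear_combination hcX
  refine ⟨Ym (u2/b) (-(u0/((p:ℚ_[p])*b))), Xm v b (v*u1/(p:ℚ_[p])),
    Xm v b (-(v*u1/(p:ℚ_[p]))) * (Ym (u2/b) (-(-(u0/((p:ℚ_[p])*b)))) * M),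
    Ym_mem v hcY, Xm_mem hv0 hcX, mem_mul (Xm_mem hv0 hcX') (mem_mul (Ym_mem v hcY') hM),
    Ym_fix _ _, Xm_fix v _ _, ?_, ?_⟩
  · have hcol : M.mulVec (Pi.single 2 1) = ![u0, u1, u2] := by
      funext i
      fin_cases i <;> simp [Matrix.mulVec, dotProduct, Fin.sum_univ_three, Pi.single_apply, hu0, hu1, hu2]
    have hstep : (Ym (u2/b) (-(-(u0/((p:ℚ_[p])*b))))).mulVec ![u0,u1,u2] = ![0, u1, b] := by
      funext i
      fin_cases i <;>
        simp [Ym, Matrix.mulVec, dotProduct, Fin.sum_univ_three, Matrix.cons_val_two,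
          Matrix.tail_cons, Matrix.head_cons] <;>
        (field_simp; first | ring1 | linear_combination hQ - hpb | linear_combination (0:ℚ_[p])*hQ)
    have hstep2 : (Xm v b (-(v*u1/(p:ℚ_[p])))).mulVec ![0,u1,b] = Pi.single 2 1 := by
      funext i
      fin_cases i <;>
        simp [Xm, Matrix.mulVec, dotProduct, Fin.sum_univ_three, Matrix.cons_val_two,
          Matrix.tail_cons, Matrix.head_cons, Pi.single_apply] <;>
        first
          | ring1
          | (field_simp; first | ring1 | linear_combination hpb | linear_combination -hpb | linear_combination (0:ℚ_[p])*hQ)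
    rw [← Matrix.mulVec_mulVec, ← Matrix.mulVec_mulVec, hcol, hstep, hstep2]
  · have e1 : Xm v b (v*u1/(p:ℚ_[p])) * Xm v b (-(v*u1/(p:ℚ_[p]))) = 1 := Xm_inv hv0 hcX
    have e2 : Ym (u2/b) (-(u0/((p:ℚ_[p])*b))) * Ym (u2/b) (-(-(u0/((p:ℚ_[p])*b)))) = 1 :=
      Ym_inv v hcY
    calc M = (Ym (u2/b) (-(u0/((p:ℚ_[p])*b))) * Ym (u2/b) (-(-(u0/((p:ℚ_[p])*b))))) * M := by
          rw [e2, one_mul]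
    _ = (Ym (u2/b) (-(u0/((p:ℚ_[p])*b))) * ((Xm v b (v*u1/(p:ℚ_[p])) * Xm v b (-(v*u1/(p:ℚ_[p])))) *
          Ym (u2/b) (-(-(u0/((p:ℚ_[p])*b)))))) * M := by rw [e1, one_mul]
    _ = Ym (u2/b) (-(u0/((p:ℚ_[p])*b))) * Xm v b (v*u1/(p:ℚ_[p])) *
          (Xm v b (-(v*u1/(p:ℚ_[p]))) * (Ym (u2/b) (-(-(u0/((p:ℚ_[p])*b)))) * M)) := by
        noncomm_ring

end Cases



/-- For odd `p`, every `M ∈ SO(3)_p` admits Cardano decompositions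
in the orderings Z·Y·X, Z·X·Y, X·Y·Z and Y·X·Z, where a factor labelled X
(resp. Y, Z) is an element of `SO(3)_p` fixing `e₁` (resp. `e₂`, `e₃`). -/
theorem cardano_decompositions_odd
    (p : ℕ) [Fact p.Prime] (hp : p ≠ 2)
    (v : ℚ_[p]) (hv : ‖v‖ = 1) (hvsq : ¬ IsSquare v)
    (A : Matrix (Fin 3) (Fin 3) ℚ_[p])
    (hA : A = Matrix.diagonal ![1, -v, (p : ℚ_[p])])
    (SO3 : Set (Matrix (Fin 3) (Fin 3) ℚ_[p]))
    (hSO3 : SO3 = {L | Lᵀ * A * L = A ∧ L.det = 1})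
    (e : Fin 3 → (Fin 3 → ℚ_[p])) (he : ∀ i, e i = Pi.single i 1)
    (M : Matrix (Fin 3) (Fin 3) ℚ_[p]) (hM : M ∈ SO3) :
    (∃ Z Y X, Z ∈ SO3 ∧ Y ∈ SO3 ∧ X ∈ SO3 ∧
      Z.mulVec (e 2) = e 2 ∧ Y.mulVec (e 1) = e 1 ∧ X.mulVec (e 0) = e 0 ∧
      M = Z * Y * X) ∧
    (∃ Z X Y, Z ∈ SO3 ∧ X ∈ SO3 ∧ Y ∈ SO3 ∧
      Z.mulVec (e 2) = e 2 ∧ X.mulVec (e 0) = e 0 ∧ Y.mulVec (e 1) = e 1 ∧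
      M = Z * X * Y) ∧
    (∃ X Y Z, X ∈ SO3 ∧ Y ∈ SO3 ∧ Z ∈ SO3 ∧
      X.mulVec (e 0) = e 0 ∧ Y.mulVec (e 1) = e 1 ∧ Z.mulVec (e 2) = e 2 ∧
      M = X * Y * Z) ∧
    (∃ Y X Z, Y ∈ SO3 ∧ X ∈ SO3 ∧ Z ∈ SO3 ∧
      Y.mulVec (e 1) = e 1 ∧ X.mulVec (e 0) = e 0 ∧ Z.mulVec (e 2) = e 2 ∧
      M = Y * X * Z) := by
  
  subst hA hSO3
  have hmem : ∀ L : Matrix (Fin 3) (Fin 3) ℚ_[p], isSO v L ↔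
      L ∈ {L : Matrix (Fin 3) (Fin 3) ℚ_[p] |
        Lᵀ * Matrix.diagonal ![1, -v, (p : ℚ_[p])] * L = Matrix.diagonal ![1, -v, (p : ℚ_[p])]
          ∧ L.det = 1} := fun L => Iff.rfl
  have hM' : isSO v M := (hmem M).mpr hM
  have he0 : e 0 = Pi.single 0 1 := he 0
  have he1 : e 1 = Pi.single 1 1 := he 1
  have he2 : e 2 = Pi.single 2 1 := he 2
  refine ⟨?_, ?_, ?_, ?_⟩
  · obtain ⟨Z, Y, X, m1, m2, m3, f1, f2, f3, hprod⟩ := caseZYX hp hv hvsq hM'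
    exact ⟨Z, Y, X, (hmem Z).mp m1, (hmem Y).mp m2, (hmem X).mp m3,
      by rw [he2]; exact f1, by rw [he1]; exact f2, by rw [he0]; exact f3, hprod⟩
  · obtain ⟨Z, X, Y, m1, m2, m3, f1, f2, f3, hprod⟩ := caseZXY hp hv hvsq hM'
    exact ⟨Z, X, Y, (hmem Z).mp m1, (hmem X).mp m2, (hmem Y).mp m3,
      by rw [he2]; exact f1, by rw [he0]; exact f2, by rw [he1]; exact f3, hprod⟩
  · obtain ⟨X, Y, Z, m1, m2, m3, f1, f2, f3, hprod⟩ := caseXYZ hp hv hvsq hM'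
    exact ⟨X, Y, Z, (hmem X).mp m1, (hmem Y).mp m2, (hmem Z).mp m3,
      by rw [he0]; exact f1, by rw [he1]; exact f2, by rw [he2]; exact f3, hprod⟩
  · obtain ⟨Y, X, Z, m1, m2, m3, f1, f2, f3, hprod⟩ := caseYXZ hp hv hvsq hM'
    exact ⟨Y, X, Z, (hmem Y).mp m1, (hmem X).mp m2, (hmem Z).mp m3,
      by rw [he1]; exact f1, by rw [he0]; exact f2, by rw [he2]; exact f3, hprod⟩
end
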